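/- arXiv:math/0112092 — 11 statements merged into one kernel-verified Lean document; each statement's English description precedes it below -/
import Mathlib

section
/- For every natural number n, the number of permutations of {1,…,n} that avoid the pattern (3,2,1) equals the n-th Catalan number C_n. -/
/-!
The prefix maxima `g i = max_{a ≤ i} ρ a` of a permutation `ρ` of `Fin n` form a staircase: a
monotone self-map lying weakly above the diagonal. If `ρ` avoids 321, its entries that are not
records (left-to-right maxima) increase, since an earlier record together with two decreasing
non-records would form a 321; so `ρ` is determined by its prefix maxima. Conversely every
staircase `g` is the prefix-maximum sequence of a 321-avoiding permutation: put `g i` at each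
record position `i` of `g` and fill the other positions increasingly with the remaining values.
Staircases on `Fin (n + 1)` split at their first fixed point `j` into staircases on `Fin j` and
`Fin (n - j)`, which gives the Catalan recurrence.
-/

open Finset Function

def IsStaircase {ι : Type*} [Preorder ι] (g : ι → ι) : Prop :=
  Monotone g ∧ ∀ i, i ≤ g i

section Staircase

variable {n : ℕ}

lemma IsStaircase.apply_last {g : Fin (n + 1) → Fin (n + 1)} (hg : IsStaircase g) :
    g (Fin.last n) = Fin.last n :=
  le_antisymm (Fin.le_last _) (hg.2 _)

def firstFixedPoint (g : {g : Fin (n + 1) → Fin (n + 1) // IsStaircase g}) : Fin (n + 1) :=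
  (univ.filter fun i => g.1 i = i).min' ⟨Fin.last n, by simpa using g.2.apply_last⟩

lemma firstFixedPoint_eq_iff {g : {g : Fin (n + 1) → Fin (n + 1) // IsStaircase g}}
    {j : Fin (n + 1)} : firstFixedPoint g = j ↔ g.1 j = j ∧ ∀ i < j, g.1 i ≠ i := by
  refine (min'_eq_iff _ _ _).trans ?_
  simp only [mem_filter, mem_univ, true_and]
  exact and_congr_right fun _ => ⟨fun h i hij hi => (h i hi).not_gt hij,
    fun h i hi => not_lt.1 fun hij => h i hij hi⟩

def glue (j : Fin (n + 1)) (g₁ : Fin j → Fin j) (g₂ : Fin (n - j) → Fin (n - j))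
    (i : Fin (n + 1)) : Fin (n + 1) :=
  if h : (i : ℕ) < j then ⟨g₁ ⟨i, h⟩ + 1, by omega⟩
  else if h' : (i : ℕ) = j then j
  else ⟨g₂ ⟨i - (j + 1), by omega⟩ + (j + 1), by omega⟩

variable {j : Fin (n + 1)} {g₁ : Fin j → Fin j} {g₂ : Fin (n - j) → Fin (n - j)}

lemma isStaircase_glue (h₁ : IsStaircase g₁) (h₂ : IsStaircase g₂) :
    IsStaircase (glue j g₁ g₂) := by
  refine ⟨fun a b hab => ?_, fun i => ?_⟩
  · simp only [glue]
    split_ifs <;> simp only [Fin.le_def] at * <;> first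
      | omega
      | exact Nat.add_le_add_right (h₁.1 (Fin.mk_le_mk.2 hab)) _
      | exact Nat.add_le_add_right (h₂.1 (Fin.mk_le_mk.2 (by omega))) _
  · simp only [glue]
    split_ifs with hi hi'
    · exact Nat.le_succ_of_le (h₁.2 ⟨i, hi⟩)
    · exact (Fin.ext hi').le
    · have := h₂.2 ⟨i - (j + 1), by omega⟩
      simp only [Fin.le_def] at this ⊢
      omega

lemma firstFixedPoint_glue (h₁ : IsStaircase g₁) (h₂ : IsStaircase g₂) :
    firstFixedPoint ⟨glue j g₁ g₂, isStaircase_glue h₁ h₂⟩ = j := by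
  refine firstFixedPoint_eq_iff.2 ⟨by simp [glue], fun i hij => ?_⟩
  have := h₁.2 ⟨i, hij⟩
  simp only [glue, dif_pos (show (i : ℕ) < j from hij), ne_eq, Fin.ext_iff, Fin.le_def] at this ⊢
  omega

lemma glue_injective :
    Injective fun p : (Fin j → Fin j) × (Fin (n - j) → Fin (n - j)) => glue j p.1 p.2 := by
  rintro ⟨g₁, g₂⟩ ⟨g₁', g₂'⟩ h
  refine Prod.ext (funext fun x => ?_) (funext fun x => ?_)
  · simpa [glue, Fin.ext_iff] using congrFun h ⟨x, by omega⟩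
  · have h₁ : ¬(x : ℕ) + (j + 1) < j := by omega
    have h₂ : (x : ℕ) + (j + 1) ≠ j := by omega
    simpa [glue, Fin.ext_iff, h₁, h₂] using congrFun h ⟨x + (j + 1), by omega⟩

lemma exists_glue_eq {g : Fin (n + 1) → Fin (n + 1)} (hg : IsStaircase g) (hj : g j = j)
    (hlt : ∀ i < j, g i ≠ i) :
    ∃ g₁ g₂, IsStaircase g₁ ∧ IsStaircase g₂ ∧ glue j g₁ g₂ = g := by
  have lower (i : ℕ) (hi : i < j) : i < g ⟨i, by omega⟩ ∧ (g ⟨i, by omega⟩ : ℕ) ≤ j := by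
    have h₁ := hg.2 ⟨i, by omega⟩
    have h₂ := hlt ⟨i, by omega⟩ (Fin.mk_lt_of_lt_val hi)
    have h₃ := hg.1 (show (⟨i, by omega⟩ : Fin (n + 1)) ≤ j from Fin.mk_le_of_le_val hi.le)
    simp only [Fin.le_def, ne_eq, Fin.ext_iff] at h₁ h₂ h₃
    omega
  refine ⟨fun i => ⟨g ⟨i, by omega⟩ - 1, by have := lower i i.2; omega⟩,
    fun k => ⟨g ⟨k + (j + 1), by omega⟩ - (j + 1), by
      have := (g ⟨k + (j + 1), by omega⟩).isLt; have := k.isLt; omega⟩,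
    ⟨fun a b hab => ?_, fun i => ?_⟩, ⟨fun a b hab => ?_, fun k => ?_⟩, funext fun i => ?_⟩
  · have := hg.1 (Fin.mk_le_mk.2 (Fin.le_def.1 hab) : (⟨a, by omega⟩ : Fin (n + 1)) ≤ ⟨b, by omega⟩)
    simp only [Fin.le_def] at this ⊢
    omega
  · have := lower i i.2
    simp only [Fin.le_def]
    omega
  · have := hg.1 (Fin.mk_le_mk.2 (Nat.add_le_add_right hab _) :
      (⟨a + (j + 1), by omega⟩ : Fin (n + 1)) ≤ ⟨b + (j + 1), by omega⟩)
    simp only [Fin.le_def] at this ⊢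
    omega
  · have := hg.2 ⟨k + (j + 1), by omega⟩
    simp only [Fin.le_def] at this ⊢
    omega
  · apply Fin.ext
    simp only [glue]
    split_ifs with hi hi'
    · have := lower i hi
      simp only [Fin.eta] at this ⊢
      omega
    · exact (congrArg Fin.val hj).symm.trans (congrArg (Fin.val ∘ g) (Fin.ext hi'.symm))
    · have := hg.2 i
      simp only [Fin.le_def] at this ⊢
      have hidx : (⟨i - (j + 1) + (j + 1), by omega⟩ : Fin (n + 1)) = i := Fin.ext (by simp; omega)
      rw [hidx]
      omega

lemma card_fiber_firstFixedPoint (j : Fin (n + 1)) :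
    Nat.card {g : {g : Fin (n + 1) → Fin (n + 1) // IsStaircase g} // firstFixedPoint g = j} =
      Nat.card {g : Fin j → Fin j // IsStaircase g} *
        Nat.card {g : Fin (n - j) → Fin (n - j) // IsStaircase g} := by
  rw [← Nat.card_prod]
  refine (Nat.card_eq_of_bijective (fun p => ⟨⟨glue j p.1 p.2, isStaircase_glue p.1.2 p.2.2⟩,
    firstFixedPoint_glue p.1.2 p.2.2⟩) ⟨fun p q h => ?_, fun g => ?_⟩).symm
  · obtain ⟨h₁, h₂⟩ := Prod.ext_iff.1 (glue_injective (a₁ := (p.1.1, p.2.1)) (a₂ := (q.1.1, q.2.1))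
      (congrArg (fun g => g.1.1) h))
    exact Prod.ext (Subtype.ext h₁) (Subtype.ext h₂)
  · obtain ⟨hj, hlt⟩ := firstFixedPoint_eq_iff.1 g.2
    obtain ⟨g₁, g₂, h₁, h₂, hg⟩ := exists_glue_eq g.1.2 hj hlt
    exact ⟨(⟨g₁, h₁⟩, ⟨g₂, h₂⟩), Subtype.ext (Subtype.ext hg)⟩

theorem card_isStaircase (n : ℕ) : Nat.card {g : Fin n → Fin n // IsStaircase g} = catalan n := by
  induction n using Nat.strong_induction_on with
  | _ n ih =>
    cases n with
    | zero =>
      have : Nonempty {g : Fin 0 → Fin 0 // IsStaircase g} := ⟨⟨id, monotone_id, fun _ => le_rfl⟩⟩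
      rw [catalan_zero, Nat.card_unique]
    | succ n =>
      rw [← Nat.card_congr (Equiv.sigmaFiberEquiv firstFixedPoint), Nat.card_sigma, catalan_succ]
      exact sum_congr rfl fun j _ => by
        rw [card_fiber_firstFixedPoint, ih _ (by omega), ih _ (by omega)]

end Staircase

section PrefixMax

variable {ι α : Type*} [Preorder ι] [LocallyFiniteOrderBot ι]

def prefixMax [SemilatticeSup α] (f : ι → α) (i : ι) : α :=
  (Iic i).sup' nonempty_Iic f

variable [LinearOrder α] {f : ι → α} {a i : ι}

lemma le_prefixMax (h : a ≤ i) : f a ≤ prefixMax f i :=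
  le_sup' f (mem_Iic.2 h)

lemma prefixMax_le_iff {b : α} : prefixMax f i ≤ b ↔ ∀ a ≤ i, f a ≤ b := by
  simp [prefixMax, sup'_le_iff]

lemma exists_le_eq_prefixMax (f : ι → α) (i : ι) : ∃ a ≤ i, f a = prefixMax f i := by
  obtain ⟨a, ha, h⟩ := exists_mem_eq_sup' (nonempty_Iic (a := i)) f
  exact ⟨a, mem_Iic.1 ha, h.symm⟩

lemma monotone_prefixMax (f : ι → α) : Monotone (prefixMax f) := fun _ _ h =>
  prefixMax_le_iff.2 fun _ ha => le_prefixMax (ha.trans h)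

end PrefixMax

lemma isStaircase_prefixMax {ι : Type*} [LinearOrder ι] [LocallyFiniteOrderBot ι]
    (ρ : Equiv.Perm ι) : IsStaircase (prefixMax ρ) := by
  refine ⟨monotone_prefixMax ρ, fun i => not_lt.1 fun h => ?_⟩
  have := card_le_card_of_injOn ρ (s := Iic i) (t := Iic (prefixMax ρ i))
    (fun a ha => mem_Iic.2 (le_prefixMax (mem_Iic.1 ha))) ρ.injective.injOn
  exact this.not_gt (card_lt_card (Iic_ssubset_Iic.2 h))

def Avoids321 {ι α : Type*} [Preorder ι] [Preorder α] (f : ι → α) : Prop :=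
  ∀ a b c, a < b → b < c → ¬(f c < f b ∧ f b < f a)

section Avoids

variable {ι α : Type*} [LinearOrder ι] [LocallyFiniteOrderBot ι] [LinearOrder α]

lemma Avoids321.lt_of_lt_prefixMax {f : ι → α} (hf : Avoids321 f) (hinj : Injective f)
    {i j : ι} (hi : f i < prefixMax f i) (hij : i < j) : f i < f j := by
  obtain ⟨a, hai, ha⟩ := exists_le_eq_prefixMax f i
  have hai : a < i := lt_of_le_of_ne hai (by rintro rfl; exact hi.ne ha)
  refine lt_of_le_of_ne (not_lt.1 fun hji => hf a i j hai hij ⟨hji, ha ▸ hi⟩) ?_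
  exact fun h => hij.ne (hinj h)

lemma Avoids321.le_of_prefixMax_eq {ρ σ : Equiv.Perm ι} (hσ : Avoids321 σ)
    (h : prefixMax ρ = prefixMax σ) {i : ι} (hprefix : ∀ a < i, ρ a = σ a) : σ i ≤ ρ i := by
  by_contra! hlt
  have hnonrec : σ i < prefixMax σ i := by
    obtain ⟨b, hbi, hb⟩ := exists_le_eq_prefixMax ρ i
    have hbi : b < i := lt_of_le_of_ne hbi fun hbi => by
      subst hbi; exact (hlt.trans_le (le_prefixMax le_rfl)).ne (hb.trans (congrFun h b))
    refine lt_of_le_of_ne (le_prefixMax le_rfl) fun hσi => hbi.ne (σ.injective ?_)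
    rw [← hprefix b hbi, hb, h, hσi]
  -- `σ` places the value `ρ i` after position `i`, below the non-record `σ i`.
  set j := σ.symm (ρ i)
  have hij : i < j := by
    rcases lt_trichotomy j i with hji | hji | hji
    · exact absurd (ρ.injective (by rw [hprefix j hji, Equiv.apply_symm_apply])) hji.ne
    · exact absurd ((congrArg σ hji).symm.trans (σ.apply_symm_apply _)) hlt.ne'
    · exact hji
  exact (hσ.lt_of_lt_prefixMax σ.injective hnonrec hij).not_gt (by simpa [j] using hlt)

lemma Avoids321.eq_of_prefixMax_eq [WellFoundedLT ι] {ρ σ : Equiv.Perm ι} (hρ : Avoids321 ρ)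
    (hσ : Avoids321 σ) (h : prefixMax ρ = prefixMax σ) : ρ = σ := by
  ext i
  induction i using WellFoundedLT.induction with
  | _ i ih =>
    exact le_antisymm (hρ.le_of_prefixMax_eq h.symm fun a ha => (ih a ha).symm)
      (hσ.le_of_prefixMax_eq h ih)

end Avoids

section Records

variable {ι α : Type*}

def IsRecord [Preorder ι] [Preorder α] (g : ι → α) (i : ι) : Prop :=
  ∀ a < i, g a < g i

lemma Monotone.exists_isRecord_eq [LinearOrder ι] [WellFoundedLT ι] [PartialOrder α] {g : ι → α}
    (hg : Monotone g) (i : ι) : ∃ r ≤ i, IsRecord g r ∧ g r = g i := by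
  induction i using WellFoundedLT.induction with
  | _ i ih =>
    by_cases hi : IsRecord g i
    · exact ⟨i, le_rfl, hi, rfl⟩
    · obtain ⟨a, hai, hga⟩ : ∃ a < i, ¬g a < g i := by simpa [IsRecord] using hi
      obtain ⟨r, hra, hr, hgr⟩ := ih a hai
      exact ⟨r, hra.trans hai.le, hr, hgr.trans ((hg hai.le).eq_of_not_lt hga)⟩

lemma injective_restrict_isRecord [LinearOrder ι] [Preorder α] (g : ι → α) :
    Injective fun r : {r // IsRecord g r} => g r := by
  intro r s h
  by_contra hne
  rcases lt_or_gt_of_ne (Subtype.coe_ne_coe.2 hne) with hrs | hrs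
  · exact (s.2 r hrs).ne h
  · exact (r.2 s hrs).ne h.symm

end Records

namespace Equiv

variable {α : Type*} {p q : α → Prop} [DecidablePred p] [DecidablePred q]
  (e : {x // p x} ≃ {x // q x}) (f : {x // ¬p x} ≃ {x // ¬q x}) {a : α}

lemma subtypeCongr_apply_of_pos (h : p a) : e.subtypeCongr f a = e ⟨a, h⟩ := by
  simp [subtypeCongr, h]

lemma subtypeCongr_apply_of_neg (h : ¬p a) : e.subtypeCongr f a = f ⟨a, h⟩ := by
  simp [subtypeCongr, h]

end Equiv

section OfPrefixMax

variable {ι : Type*} [LinearOrder ι] [Fintype ι]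

noncomputable def recordEquiv (g : ι → ι) :
    {r // IsRecord g r} ≃ {v // ∃ r, IsRecord g r ∧ g r = v} :=
  Equiv.ofBijective (fun r => ⟨g r, r, r.2, rfl⟩)
    ⟨fun _ _ h => injective_restrict_isRecord g (congrArg Subtype.val h),
      fun ⟨_, r, hr, hv⟩ => ⟨⟨r, hr⟩, Subtype.ext hv⟩⟩

open Classical in
noncomputable def nonRecordOrderIso (g : ι → ι) :
    {i // ¬IsRecord g i} ≃o {v // ¬∃ r, IsRecord g r ∧ g r = v} :=
  (Fintype.orderIsoFinOfCardEq _ rfl).symm.trans (Fintype.orderIsoFinOfCardEq _ (by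
    rw [Fintype.card_subtype_compl, Fintype.card_subtype_compl,
      Fintype.card_congr (recordEquiv g)]))

open Classical in
noncomputable def ofPrefixMax (g : ι → ι) : Equiv.Perm ι :=
  (recordEquiv g).subtypeCongr (nonRecordOrderIso g).toEquiv

variable {g : ι → ι} {i j : ι}

lemma ofPrefixMax_apply_of_isRecord (hi : IsRecord g i) : ofPrefixMax g i = g i := by
  classical
  rw [ofPrefixMax, Equiv.subtypeCongr_apply_of_pos _ _ hi]
  rfl

lemma ofPrefixMax_lt_of_not_isRecord (hi : ¬IsRecord g i) (hj : ¬IsRecord g j) (hij : i < j) :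
    ofPrefixMax g i < ofPrefixMax g j := by
  classical
  rw [ofPrefixMax, Equiv.subtypeCongr_apply_of_neg _ _ hi, Equiv.subtypeCongr_apply_of_neg _ _ hj]
  exact (nonRecordOrderIso g).strictMono (show (⟨i, hi⟩ : {x // ¬IsRecord g x}) < ⟨j, hj⟩ from hij)

variable [LocallyFiniteOrderBot ι]

/-- Pigeonhole: otherwise the values `≤ g i` would all be taken before position `i`. -/
lemma ofPrefixMax_apply_lt (hg : IsStaircase g) (hi : ¬IsRecord g i) :
    ofPrefixMax g i < g i := by
  set ρ := ofPrefixMax g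
  obtain ⟨r, hri, hr, hgr⟩ := hg.1.exists_isRecord_eq i
  have hri : r < i := lt_of_le_of_ne hri (by rintro rfl; exact hi hr)
  by_contra! hle
  have hlt : g i < ρ i := lt_of_le_of_ne hle fun h => hri.ne (ρ.injective (by
    rw [← h, ofPrefixMax_apply_of_isRecord hr, hgr]))
  have hlater : ∀ j, i ≤ j → g i < ρ j := by
    intro j hij
    rcases hij.eq_or_lt with rfl | hij
    · exact hlt
    by_cases hj : IsRecord g j
    · exact (ofPrefixMax_apply_of_isRecord hj).symm ▸ hj i hij
    · exact hlt.trans (ofPrefixMax_lt_of_not_isRecord hi hj hij)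
  have hmaps : Set.MapsTo ρ.symm (Iic (g i)) (Iio i) := fun v hv => by
    simp only [coe_Iic, coe_Iio, Set.mem_Iic, Set.mem_Iio] at hv ⊢
    by_contra! hle
    exact (hlater _ hle).not_ge (by simpa using hv)
  have hcard := card_le_card_of_injOn ρ.symm hmaps ρ.symm.injective.injOn
  refine hcard.not_gt (card_lt_card ((ssubset_iff_of_subset fun a ha => ?_).2 ⟨i, ?_, ?_⟩))
  · exact mem_Iic.2 ((mem_Iio.1 ha).le.trans (hg.2 i))
  · exact mem_Iic.2 (hg.2 i)
  · simp

lemma ofPrefixMax_apply_le (hg : IsStaircase g) (i : ι) :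
    ofPrefixMax g i ≤ g i := by
  by_cases hi : IsRecord g i
  · exact (ofPrefixMax_apply_of_isRecord hi).le
  · exact (ofPrefixMax_apply_lt hg hi).le

lemma ofPrefixMax_lt_of_isRecord (hg : IsStaircase g) (hj : IsRecord g j)
    (hij : i < j) : ofPrefixMax g i < ofPrefixMax g j :=
  (ofPrefixMax_apply_of_isRecord hj).symm ▸ (ofPrefixMax_apply_le hg i).trans_lt (hj i hij)

lemma avoids321_ofPrefixMax (hg : IsStaircase g) :
    Avoids321 (ofPrefixMax g) := by
  rintro a b c hab hbc ⟨hcb, hba⟩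
  by_cases hc : IsRecord g c
  · exact hcb.not_gt (ofPrefixMax_lt_of_isRecord hg hc hbc)
  by_cases hb : IsRecord g b
  · exact hba.not_gt (ofPrefixMax_lt_of_isRecord hg hb hab)
  · exact hcb.not_gt (ofPrefixMax_lt_of_not_isRecord hb hc hbc)

lemma prefixMax_ofPrefixMax (hg : IsStaircase g) :
    prefixMax (ofPrefixMax g) = g := by
  funext i
  refine le_antisymm
    (prefixMax_le_iff.2 fun a hai => (ofPrefixMax_apply_le hg a).trans (hg.1 hai)) ?_
  obtain ⟨r, hri, hr, hgr⟩ := hg.1.exists_isRecord_eq i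
  rw [← hgr, ← ofPrefixMax_apply_of_isRecord hr]
  exact le_prefixMax hri

end OfPrefixMax

/-- The number of (3,2,1)-avoiding permutations of {1,…,n} is the n-th Catalan number. -/
theorem card_avoiding_321_eq_catalan (n : ℕ) :
    (Finset.univ.filter (fun ρ : Equiv.Perm (Fin n) =>
      ∀ a b c : Fin n, a < b → b < c → ¬(ρ c < ρ b ∧ ρ b < ρ a))).card = catalan n := by
  rw [← card_isStaircase, ← Fintype.card_subtype, ← Nat.card_eq_fintype_card]
  refine Nat.card_eq_of_bijective (fun ρ => ⟨prefixMax ρ.1, isStaircase_prefixMax ρ.1⟩)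
    ⟨fun ρ σ h => Subtype.ext ?_, fun g => ?_⟩
  · exact Avoids321.eq_of_prefixMax_eq ρ.2 σ.2 (congrArg Subtype.val h)
  · exact ⟨⟨ofPrefixMax g.1, avoids321_ofPrefixMax g.2⟩, Subtype.ext (prefixMax_ofPrefixMax g.2)⟩
end

section
/- For every natural number n, the number of permutations of {1,…,n} that avoid the pattern (3,1,2) equals the n-th Catalan number C_n. -/
/-!
If `ρ` avoids 312 and `ρ p = 0`, every entry left of `p` is smaller than every entry right of
`p`, since otherwise these two entries and the `0` between them form a 312. So deleting the `0`
leaves a 312-avoiding permutation of the `p` smallest values followed by a 312-avoiding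
permutation of the others, and conversely every such pair glues back. Counting by the position
of `0` gives the Catalan recursion `C (n + 1) = ∑ i, C i * C (n - i)`.
-/

open Equiv Function

def Avoids312 {ι α : Type*} [LT ι] [LT α] (f : ι → α) : Prop :=
  ∀ a b c, a < b → b < c → ¬(f b < f c ∧ f c < f a)

instance {ι α : Type*} [LT ι] [LT α] [Fintype ι] [DecidableLT ι] [DecidableLT α] {f : ι → α} :
    Decidable (Avoids312 f) :=
  inferInstanceAs (Decidable (∀ a b c, a < b → b < c → ¬(f b < f c ∧ f c < f a)))

theorem Fin.castAdd_lt_natAdd {m n : ℕ} (a : Fin m) (b : Fin n) : castAdd n a < natAdd m b := by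
  simp only [Fin.lt_def, Fin.val_castAdd, Fin.val_natAdd]; omega

section Avoids312

variable {ι κ α β : Type*}

theorem Avoids312.comp_strictMono [Preorder ι] [Preorder κ] [LT α] {f : ι → α}
    (hf : Avoids312 f) {g : κ → ι} (hg : StrictMono g) : Avoids312 (f ∘ g) :=
  fun _ _ _ hab hbc => hf _ _ _ (hg hab) (hg hbc)

theorem avoids312_strictMono_comp_iff [LT ι] [LinearOrder α] [Preorder β] {f : ι → α}
    {h : α → β} (hh : StrictMono h) : Avoids312 (h ∘ f) ↔ Avoids312 f := by
  simp only [Avoids312, comp_apply, hh.lt_iff_lt]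

theorem avoids312_append_iff {m n : ℕ} [Preorder α] {f : Fin m → α} {g : Fin n → α}
    (hfg : ∀ a b, f a < g b) : Avoids312 (Fin.append f g) ↔ Avoids312 f ∧ Avoids312 g := by
  refine ⟨fun h => ⟨?_, ?_⟩, fun ⟨hf, hg⟩ a b c hab hbc ⟨hbc', hca'⟩ => ?_⟩
  · simpa [comp_def] using h.comp_strictMono (Fin.strictMono_castAdd n)
  · simpa [comp_def] using h.comp_strictMono (Fin.strictMono_natAdd m)
  induction a using Fin.addCases <;> induction b using Fin.addCases <;>
    induction c using Fin.addCases <;>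
    simp only [Fin.append_left, Fin.append_right, (Fin.strictMono_castAdd n).lt_iff_lt,
      Fin.natAdd_lt_natAdd_iff] at hab hbc hbc' hca'
  · exact hf _ _ _ hab hbc ⟨hbc', hca'⟩
  · exact lt_asymm (hfg _ _) hca'
  · exact (Fin.castAdd_lt_natAdd _ _).not_gt hbc
  · exact lt_asymm (hfg _ _) hca'
  · exact (Fin.castAdd_lt_natAdd _ _).not_gt hab
  · exact (Fin.castAdd_lt_natAdd _ _).not_gt hab
  · exact (Fin.castAdd_lt_natAdd _ _).not_gt hbc
  · exact hg _ _ _ hab hbc ⟨hbc', hca'⟩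

theorem avoids312_insertNth_iff {n : ℕ} [LinearOrder α] {p : Fin (n + 1)} {x : α}
    {f : Fin n → α} (hx : ∀ a, x < f a) :
    Avoids312 (Fin.insertNth p x f) ↔
      Avoids312 f ∧ ∀ a c, p.succAbove a < p → p < p.succAbove c → f a ≤ f c := by
  refine ⟨fun h => ⟨?_, fun a c ha hc => ?_⟩, fun ⟨hf, hsplit⟩ a b c hab hbc ⟨hbc', hca'⟩ => ?_⟩
  · simpa using h.comp_strictMono (Fin.strictMono_succAbove p)
  · simpa [hx c] using h _ _ _ ha hc
  induction a using p.succAboveCases <;> induction b using p.succAboveCases <;>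
    induction c using p.succAboveCases <;>
    simp only [Fin.insertNth_apply_same, Fin.insertNth_apply_succAbove,
      Fin.succAbove_lt_succAbove_iff, lt_self_iff_false] at hab hbc hbc' hca'
  · exact (hx _).not_gt hca'
  · exact (hsplit _ _ hab hbc).not_gt hca'
  · exact (hx _).not_gt hbc'
  · exact hf _ _ _ hab hbc ⟨hbc', hca'⟩

end Avoids312

namespace Equiv.Perm

variable {m n : ℕ}

def insertZero (p : Fin (n + 1)) (σ : Perm (Fin n)) : Perm (Fin (n + 1)) :=
  (finSuccEquiv' p).trans (σ.optionCongr.trans (finSuccEquiv n).symm)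

theorem coe_insertZero (p : Fin (n + 1)) (σ : Perm (Fin n)) :
    ⇑(insertZero p σ) = Fin.insertNth p 0 (Fin.succ ∘ σ) := by
  ext x : 1
  induction x using p.succAboveCases <;> simp [insertZero]

theorem insertZero_injective (p : Fin (n + 1)) : Injective (insertZero p) := fun σ τ h =>
  Equiv.ext fun a => by simpa [coe_insertZero] using DFunLike.congr_fun h (p.succAbove a)

theorem exists_insertZero_eq {p : Fin (n + 1)} {ρ : Perm (Fin (n + 1))} (h : ρ p = 0) :
    ∃ σ, insertZero p σ = ρ := by
  set e : Perm (Option (Fin n)) := (finSuccEquiv' p).symm.trans (ρ.trans (finSuccEquiv n))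
  have he : e none = none := by simp [e, h]
  have hσ : (removeNone e).optionCongr = e := by
    have := decomposeOption.symm_apply_apply e
    rwa [decomposeOption_apply, he, decomposeOption_symm_apply, swap_self] at this
  refine ⟨removeNone e, Equiv.ext fun x => ?_⟩
  simp [insertZero, hσ, e]

theorem avoids312_insertZero_iff {p : Fin (n + 1)} {σ : Perm (Fin n)} :
    Avoids312 (insertZero p σ) ↔
      Avoids312 σ ∧ ∀ a c, p.succAbove a < p → p < p.succAbove c → σ a ≤ σ c := by
  rw [coe_insertZero, avoids312_insertNth_iff (f := Fin.succ ∘ σ) fun a => Fin.succ_pos _,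
    avoids312_strictMono_comp_iff Fin.strictMono_succ]
  simp only [comp_apply, Fin.succ_le_succ_iff]

def blockSum (σ : Perm (Fin m)) (τ : Perm (Fin n)) : Perm (Fin (m + n)) :=
  finSumFinEquiv.permCongr (σ.sumCongr τ)

theorem coe_blockSum (σ : Perm (Fin m)) (τ : Perm (Fin n)) :
    ⇑(blockSum σ τ) = Fin.append (Fin.castAdd n ∘ σ) (Fin.natAdd m ∘ τ) := by
  ext x : 1
  induction x using Fin.addCases <;> simp [blockSum]

theorem blockSum_injective :
    Injective fun στ : Perm (Fin m) × Perm (Fin n) => blockSum στ.1 στ.2 :=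
  finSumFinEquiv.permCongr.injective.comp sumCongrHom_injective

theorem exists_blockSum_eq {π : Perm (Fin (m + n))} (h : ∀ a, (π (Fin.castAdd n a) : ℕ) < m) :
    ∃ σ τ, blockSum σ τ = π := by
  have hmaps : Set.MapsTo (finSumFinEquiv.symm.permCongr π) (Set.range Sum.inl)
      (Set.range Sum.inl) := by
    rintro _ ⟨a, rfl⟩
    exact ⟨⟨_, h a⟩, finSumFinEquiv.eq_symm_apply.mpr (Fin.ext rfl)⟩
  obtain ⟨⟨σ, τ⟩, hστ⟩ := mem_sumCongrHom_range_of_perm_mapsTo_inl hmaps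
  refine ⟨σ, τ, ?_⟩
  have hστ' : σ.sumCongr τ = finSumFinEquiv.symm.permCongr π := hστ
  rw [blockSum, hστ', ← permCongr_symm, apply_symm_apply]

theorem avoids312_blockSum_iff {σ : Perm (Fin m)} {τ : Perm (Fin n)} :
    Avoids312 (blockSum σ τ) ↔ Avoids312 σ ∧ Avoids312 τ := by
  rw [coe_blockSum,
    avoids312_append_iff (f := Fin.castAdd n ∘ σ) (g := Fin.natAdd m ∘ τ) fun a b =>
      Fin.castAdd_lt_natAdd _ _,
    avoids312_strictMono_comp_iff (Fin.strictMono_castAdd n),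
    avoids312_strictMono_comp_iff (Fin.strictMono_natAdd m)]

theorem val_apply_castAdd_lt {π : Perm (Fin (m + n))}
    (h : ∀ a b, π (Fin.castAdd n a) < π (Fin.natAdd m b)) (a : Fin m) :
    (π (Fin.castAdd n a) : ℕ) < m := by
  -- all values up to `π (castAdd n a)` sit at left positions, and there are only `m` of those
  have hsub : (Finset.Iic (π (Fin.castAdd n a))).map π.symm.toEmbedding ⊆
      Finset.univ.map (Fin.castAddEmb n) := by
    intro x hx
    rw [Finset.mem_map_equiv, symm_symm, Finset.mem_Iic] at hx
    simp only [Finset.mem_map, Finset.mem_univ, Fin.coe_castAddEmb, true_and]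
    induction x using Fin.addCases with
    | left a' => exact ⟨a', rfl⟩
    | right b => exact absurd hx (h a b).not_ge
  simpa using Finset.card_le_card hsub

end Equiv.Perm

open Equiv Perm Finset

theorem card_filter_apply_eq_zero (n : ℕ) (p : Fin (n + 1)) :
    #{ρ : Perm (Fin (n + 1)) | Avoids312 ρ ∧ ρ p = 0} =
      #{σ : Perm (Fin n) | Avoids312 σ ∧
        ∀ a c, p.succAbove a < p → p < p.succAbove c → σ a ≤ σ c} := by
  symm
  refine card_nbij (insertZero p) (fun σ hσ => ?_) (insertZero_injective p).injOn
    fun ρ hρ => ?_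
  · simp only [mem_coe, mem_filter, mem_univ, true_and] at hσ ⊢
    exact ⟨avoids312_insertZero_iff.mpr hσ, by simp [coe_insertZero]⟩
  · simp only [mem_coe, mem_filter, mem_univ, true_and] at hρ
    obtain ⟨σ, rfl⟩ := exists_insertZero_eq hρ.2
    exact ⟨σ, by simpa using avoids312_insertZero_iff.mp hρ.1, rfl⟩

theorem card_filter_castAdd_le_natAdd (m n : ℕ) :
    #{π : Perm (Fin (m + n)) | Avoids312 π ∧ ∀ a b, π (Fin.castAdd n a) ≤ π (Fin.natAdd m b)} =
      #{σ : Perm (Fin m) | Avoids312 σ} * #{τ : Perm (Fin n) | Avoids312 τ} := by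
  rw [← card_product]
  symm
  refine card_nbij (fun στ => blockSum στ.1 στ.2) (fun στ hστ => ?_) blockSum_injective.injOn
    fun π hπ => ?_
  · simp only [mem_coe, mem_product, mem_filter, mem_univ, true_and] at hστ ⊢
    refine ⟨avoids312_blockSum_iff.mpr hστ, fun a b => ?_⟩
    simpa [coe_blockSum] using (Fin.castAdd_lt_natAdd _ _).le
  · simp only [mem_coe, mem_filter, mem_univ, true_and] at hπ
    have hlt a b : π (Fin.castAdd n a) < π (Fin.natAdd m b) :=
      (hπ.2 a b).lt_of_ne (π.injective.ne (Fin.castAdd_lt_natAdd a b).ne)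
    obtain ⟨σ, τ, rfl⟩ := exists_blockSum_eq (val_apply_castAdd_lt hlt)
    exact ⟨(σ, τ), by simpa using avoids312_blockSum_iff.mp hπ.1, rfl⟩

theorem card_filter_symm_zero (m n : ℕ) :
    #{ρ : Perm (Fin (m + n + 1)) | Avoids312 ρ ∧ (ρ.symm 0 : ℕ) = m} =
      #{σ : Perm (Fin m) | Avoids312 σ} * #{τ : Perm (Fin n) | Avoids312 τ} := by
  set p : Fin (m + n + 1) := ⟨m, by omega⟩
  have hp (ρ : Perm (Fin (m + n + 1))) : (ρ.symm 0 : ℕ) = m ↔ ρ p = 0 := by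
    rw [← ρ.eq_symm_apply, Fin.ext_iff]; exact eq_comm
  have hleft (a : Fin (m + n)) : p.succAbove a < p ↔ (a : ℕ) < m := by
    rw [Fin.succAbove_lt_iff_castSucc_lt, Fin.lt_def]; rfl
  have hright (c : Fin (m + n)) : p < p.succAbove c ↔ m ≤ (c : ℕ) := by
    rw [Fin.lt_succAbove_iff_le_castSucc, Fin.le_def]; rfl
  simp_rw [hp, card_filter_apply_eq_zero, hleft, hright, ← card_filter_castAdd_le_natAdd]
  congr 1
  ext π
  simp [Fin.forall_fin_add]

/-- The number of (3,1,2)-avoiding permutations of {1,…,n} is the n-th Catalan number. -/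
theorem card_avoiding_312_eq_catalan (n : ℕ) :
    (Finset.univ.filter (fun ρ : Equiv.Perm (Fin n) =>
      ∀ a b c : Fin n, a < b → b < c → ¬(ρ b < ρ c ∧ ρ c < ρ a))).card = catalan n := by
  suffices h : #{ρ : Perm (Fin n) | Avoids312 ρ} = catalan n by
    simpa [Avoids312] using h
  induction n using Nat.strong_induction_on with
  | _ n ih =>
  rcases n with _ | n
  · simp [Avoids312]
  rw [card_eq_sum_card_fiberwise (f := fun ρ => (ρ.symm 0 : ℕ)) (t := range (n + 1))
    fun ρ _ => mem_range.mpr (ρ.symm 0).isLt, catalan_succ,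
    Fin.sum_univ_eq_sum_range (fun i => catalan i * catalan (n - i))]
  refine sum_congr rfl fun m hm => ?_
  obtain ⟨k, rfl⟩ : ∃ k, n = m + k := ⟨n - m, by have := mem_range.mp hm; omega⟩
  rw [filter_filter, card_filter_symm_zero, ih m (by omega), ih k (by omega),
    Nat.add_sub_cancel_left]
end

section
/- For every natural number n, the number of permutations of {1,…,n} that avoid the pattern (3,2,1) equals the number of permutations of {1,…,n} that avoid the pattern (3,1,2). -/
/-!
A permutation avoiding 321, or one avoiding 312, is determined by its left-to-right maxima
(positions and values): at the first position where two permutations with the same maxima differ,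
the larger of the two values is not a maximum, and each value occurs later in the other
permutation, which produces the forbidden pattern. Conversely, swapping the last two entries of an
occurrence of 321 (resp. 312) keeps the maxima, as both entries lie below the first one, and makes
the permutation lexicographically smaller (resp. larger). So a lexicographically minimal (resp.
maximal) permutation with prescribed maxima avoids 321 (resp. 312), and both classes are in
bijection with the sets of left-to-right maxima of all permutations.
-/

open Equiv

lemma Finset.card_filter_eq_card_image_of_injOn {β γ : Type*} [Fintype β] [DecidableEq γ]
    {p : β → Prop} [DecidablePred p] (f : β → γ) (hinj : Set.InjOn f {x | p x})
    (hsurj : ∀ x, ∃ y, p y ∧ f y = f x) :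
    (Finset.univ.filter p).card = (Finset.univ.image f).card := by
  rw [← Finset.card_image_of_injOn (by simpa using hinj)]
  congr 1
  ext z
  simp only [Finset.mem_image, Finset.mem_filter, Finset.mem_univ, true_and]
  exact ⟨fun ⟨x, _, hx⟩ => ⟨x, hx⟩, fun ⟨x, hx⟩ => (hsurj x).imp fun y hy => ⟨hy.1, hy.2.trans hx⟩⟩

namespace Equiv.Perm

variable {α : Type*} [LinearOrder α]

def Avoids321 (ρ : Perm α) : Prop :=
  ∀ a b c, a < b → b < c → ¬(ρ c < ρ b ∧ ρ b < ρ a)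

def Avoids312 (ρ : Perm α) : Prop :=
  ∀ a b c, a < b → b < c → ¬(ρ b < ρ c ∧ ρ c < ρ a)

instance [Fintype α] : DecidablePred (Avoids321 (α := α)) :=
  fun ρ => inferInstanceAs (Decidable (∀ a b c, a < b → b < c → ¬(ρ c < ρ b ∧ ρ b < ρ a)))

instance [Fintype α] : DecidablePred (Avoids312 (α := α)) :=
  fun ρ => inferInstanceAs (Decidable (∀ a b c, a < b → b < c → ¬(ρ b < ρ c ∧ ρ c < ρ a)))

def leftToRightMaxima (ρ : Perm α) : Set (α × α) :=
  {p | ρ p.1 = p.2 ∧ ∀ j < p.1, ρ j < p.2}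

lemma leftToRightMaxima_mul_swap_subset {ρ : Perm α} {a b c : α} (hab : a < b) (hbc : b < c)
    (hb : ρ b < ρ a) (hc : ρ c < ρ a) :
    leftToRightMaxima (ρ * swap b c) ⊆ leftToRightMaxima ρ := by
  rintro ⟨i, v⟩ ⟨hv, hmax⟩
  simp only [Perm.mul_apply] at hv hmax
  have hac : a < c := hab.trans hbc
  have hρa : ρ (swap b c a) = ρ a := by rw [swap_apply_of_ne_of_ne hab.ne hac.ne]
  have hswapped : ∀ j, j = b ∨ j = c → ρ (swap b c j) < ρ a ∧ ρ j < ρ a := by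
    rintro j (rfl | rfl) <;> simp [hb, hc]
  have hi : ¬(i = b ∨ i = c) := by
    intro hi
    have hai : a < i := by rcases hi with rfl | rfl <;> assumption
    exact (hswapped i hi).1.not_gt (hv ▸ hρa ▸ hmax a hai)
  rw [not_or] at hi
  refine ⟨by rwa [swap_apply_of_ne_of_ne hi.1 hi.2] at hv, fun j hj => ?_⟩
  by_cases hj' : j = b ∨ j = c
  · have hai : a < i := by rcases hj' with rfl | rfl <;> [exact hab.trans hj; exact hac.trans hj]
    exact (hswapped j hj').2.trans (hρa ▸ hmax a hai)
  · rw [not_or] at hj'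
    simpa [swap_apply_of_ne_of_ne hj'.1 hj'.2] using hmax j hj

lemma leftToRightMaxima_mul_swap {ρ : Perm α} {a b c : α} (hab : a < b) (hbc : b < c)
    (hb : ρ b < ρ a) (hc : ρ c < ρ a) :
    leftToRightMaxima (ρ * swap b c) = leftToRightMaxima ρ := by
  refine (leftToRightMaxima_mul_swap_subset hab hbc hb hc).antisymm ?_
  have hρ := leftToRightMaxima_mul_swap_subset (ρ := ρ * swap b c) hab hbc
  simp only [mul_swap_mul_self, Perm.mul_apply, swap_apply_left, swap_apply_right,
    swap_apply_of_ne_of_ne hab.ne (hab.trans hbc).ne] at hρ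
  exact hρ hc hb

lemma toLex_mul_swap_lt {ρ : Perm α} {b c : α} (hbc : b < c) (h : ρ c < ρ b) :
    toLex ⇑(ρ * swap b c) < toLex ⇑ρ :=
  ⟨b, fun j hj => by simp [swap_apply_of_ne_of_ne hj.ne (hj.trans hbc).ne], by simpa using h⟩

lemma exists_lt_of_leftToRightMaxima_eq {σ τ : Perm α}
    (h : leftToRightMaxima σ = leftToRightMaxima τ) {k : α} (hk : σ k ≠ τ k) :
    ∃ a < k, τ k < τ a := by
  by_contra! hmax
  have hτk : (k, τ k) ∈ leftToRightMaxima τ :=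
    ⟨rfl, fun j hj => (hmax j hj).lt_of_ne (τ.injective.ne hj.ne)⟩
  exact hk (h ▸ hτk).1

lemma lt_symm_apply_of_forall_lt_eq {σ τ : Perm α} {k : α} (hagree : ∀ j < k, σ j = τ j)
    (hk : σ k ≠ τ k) : k < τ.symm (σ k) := by
  by_contra! hle
  rcases hle.lt_or_eq with hlt | heq
  · have := hagree _ hlt
    rw [apply_symm_apply, σ.injective.eq_iff] at this
    exact hlt.ne this
  · exact hk (τ.symm_apply_eq.mp heq)

lemma Avoids321.not_toLex_lt {σ τ : Perm α} (hτ : τ.Avoids321)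
    (h : leftToRightMaxima σ = leftToRightMaxima τ) : ¬toLex ⇑σ < toLex ⇑τ := by
  rintro ⟨k, hagree, hlt⟩
  obtain ⟨a, hak, ha⟩ := exists_lt_of_leftToRightMaxima_eq h hlt.ne
  refine hτ a k _ hak (lt_symm_apply_of_forall_lt_eq hagree hlt.ne) ⟨?_, ha⟩
  simpa using hlt

lemma Avoids312.not_toLex_lt {σ τ : Perm α} (hσ : σ.Avoids312)
    (h : leftToRightMaxima σ = leftToRightMaxima τ) : ¬toLex ⇑σ < toLex ⇑τ := by
  rintro ⟨k, hagree, hlt⟩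
  obtain ⟨a, hak, ha⟩ := exists_lt_of_leftToRightMaxima_eq h hlt.ne
  have hkc := lt_symm_apply_of_forall_lt_eq (fun j hj => (hagree j hj).symm) hlt.ne'
  refine hσ a k _ hak hkc ⟨by simpa using hlt, ?_⟩
  rw [show σ a = τ a from hagree a hak]
  simpa using ha

lemma injOn_leftToRightMaxima_of_not_toLex_lt [WellFoundedLT α] {p : Perm α → Prop}
    (hp : ∀ σ τ, p σ → p τ → leftToRightMaxima σ = leftToRightMaxima τ → ¬toLex ⇑σ < toLex ⇑τ) :
    Set.InjOn leftToRightMaxima {σ | p σ} := by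
  intro σ hσ τ hτ h
  rcases lt_trichotomy (toLex ⇑σ) (toLex ⇑τ) with hlt | heq | hgt
  · exact absurd hlt (hp σ τ hσ hτ h)
  · exact DFunLike.coe_injective heq
  · exact absurd hgt (hp τ σ hτ hσ h.symm)

lemma injOn_leftToRightMaxima_avoids321 [WellFoundedLT α] :
    Set.InjOn leftToRightMaxima {σ : Perm α | σ.Avoids321} :=
  injOn_leftToRightMaxima_of_not_toLex_lt fun _ _ _ hτ => Avoids321.not_toLex_lt hτ

lemma injOn_leftToRightMaxima_avoids312 [WellFoundedLT α] :
    Set.InjOn leftToRightMaxima {σ : Perm α | σ.Avoids312} :=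
  injOn_leftToRightMaxima_of_not_toLex_lt fun _ _ hσ _ => Avoids312.not_toLex_lt hσ

lemma exists_avoids321_leftToRightMaxima_eq [Finite α] (ρ : Perm α) :
    ∃ σ : Perm α, σ.Avoids321 ∧ leftToRightMaxima σ = leftToRightMaxima ρ := by
  obtain ⟨σ, hσ, hmin⟩ := Set.exists_min_image {σ | leftToRightMaxima σ = leftToRightMaxima ρ}
    (fun σ : Perm α => toLex ⇑σ) (Set.toFinite _) ⟨ρ, rfl⟩
  refine ⟨σ, fun a b c hab hbc ⟨hσcb, hσba⟩ => ?_, hσ⟩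
  have hswap := leftToRightMaxima_mul_swap hab hbc hσba (hσcb.trans hσba)
  exact (toLex_mul_swap_lt hbc hσcb).not_ge (hmin _ (hswap.trans hσ))

lemma exists_avoids312_leftToRightMaxima_eq [Finite α] (ρ : Perm α) :
    ∃ σ : Perm α, σ.Avoids312 ∧ leftToRightMaxima σ = leftToRightMaxima ρ := by
  obtain ⟨σ, hσ, hmax⟩ := Set.exists_max_image {σ | leftToRightMaxima σ = leftToRightMaxima ρ}
    (fun σ : Perm α => toLex ⇑σ) (Set.toFinite _) ⟨ρ, rfl⟩
  refine ⟨σ, fun a b c hab hbc ⟨hσbc, hσca⟩ => ?_, hσ⟩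
  have hswap := leftToRightMaxima_mul_swap hab hbc (hσbc.trans hσca) hσca
  have hlt := toLex_mul_swap_lt (ρ := σ * swap b c) hbc (by simpa using hσbc)
  rw [mul_swap_mul_self] at hlt
  exact hlt.not_ge (hmax _ (hswap.trans hσ))

theorem card_filter_avoids321_eq_card_filter_avoids312 [Fintype α] :
    (Finset.univ.filter (Avoids321 (α := α))).card =
      (Finset.univ.filter (Avoids312 (α := α))).card := by
  classical
  rw [Finset.card_filter_eq_card_image_of_injOn _ injOn_leftToRightMaxima_avoids321
      exists_avoids321_leftToRightMaxima_eq,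
    Finset.card_filter_eq_card_image_of_injOn _ injOn_leftToRightMaxima_avoids312
      exists_avoids312_leftToRightMaxima_eq]

end Equiv.Perm

/-- The number of (3,2,1)-avoiding permutations of {1,…,n} equals the number of
(3,1,2)-avoiding permutations of {1,…,n}. -/
theorem card_avoiding_321_eq_card_avoiding_312 (n : ℕ) :
    (Finset.univ.filter (fun ρ : Equiv.Perm (Fin n) =>
      ∀ a b c : Fin n, a < b → b < c → ¬(ρ c < ρ b ∧ ρ b < ρ a))).card =
    (Finset.univ.filter (fun ρ : Equiv.Perm (Fin n) =>
      ∀ a b c : Fin n, a < b → b < c → ¬(ρ b < ρ c ∧ ρ c < ρ a))).card := by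
  convert Equiv.Perm.card_filter_avoids321_eq_card_filter_avoids312 (α := Fin n) <;> rfl
end

section
/- Let ρ = (ρ_1,…,ρ_n) be a permutation of {1,…,n} and let 1 ≤ m ≤ k ≤ n be indices such that ρ_m is a left-to-right maximum of ρ and no entry ρ_p with m < p ≤ k is a left-to-right maximum. Then the number of indices j with m < j ≤ n and ρ_j < ρ_m is at least k − m; i.e., #{j : m < j ≤ n, ρ_j < ρ_m} ≥ k − m. (This expresses that every down-step of the path ψ(ρ) has nonnegative height, so ψ maps S_n into the set of Dyck paths.) -/
/-- An entry `ρ i` is a left-to-right maximum if it is greater than all entries to its left. -/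
def IsLRMax {n : ℕ} (ρ : Equiv.Perm (Fin n)) (i : Fin n) : Prop :=
  ∀ j, j < i → ρ j < ρ i

/-- If `ρ m` is a left-to-right maximum and no entry strictly between positions `m` and `k`
(inclusive of `k`) is a left-to-right maximum, then the number of entries to the right of `m`
that are smaller than `ρ m` is at least `k - m`.  (Every down-step of the path `ψ(ρ)` has
nonnegative height.) -/
theorem downstep_height_nonneg {n : ℕ} (ρ : Equiv.Perm (Fin n)) (m k : Fin n)
    (hmk : m ≤ k) (hmax : IsLRMax ρ m)
    (hno : ∀ p, m < p → p ≤ k → ¬ IsLRMax ρ p) :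
    (k : ℕ) - (m : ℕ) ≤ (Finset.univ.filter (fun j => m < j ∧ ρ j < ρ m)).card := by
  have key : ∀ N : ℕ, ∀ p : Fin n, (p : ℕ) ≤ N → m < p → p ≤ k → ρ p < ρ m := by
    intro N
    induction N with
    | zero => intro p hp hmp _; omega
    | succ N ih =>
      intro p hp hmp hpk
      have hnot := hno p hmp hpk
      simp only [IsLRMax, not_forall] at hnot
      obtain ⟨j, hjp, hge⟩ := hnot
      push_neg at hge
      rcases lt_trichotomy j m with hj | hj | hj
      · exact lt_of_le_of_lt hge (hmax j hj)
      · subst hj; exact lt_of_le_of_ne hge (fun h => (Fin.ne_of_lt hmp) (ρ.injective h).symm)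
      · have hjk : j ≤ k := le_trans (le_of_lt hjp) hpk
        have hjN : (j : ℕ) ≤ N := by
          have := Fin.lt_iff_val_lt_val.mp hjp; omega
        exact lt_trans (lt_of_le_of_ne hge (fun h => (Fin.ne_of_lt hjp) (ρ.injective h).symm)) (ih j hjN hj hjk)
  have hsub : Finset.Ioc m k ⊆ Finset.univ.filter (fun j => m < j ∧ ρ j < ρ m) := by
    intro p hp
    rw [Finset.mem_Ioc] at hp
    rw [Finset.mem_filter]
    exact ⟨Finset.mem_univ _, hp.1, key p p le_rfl hp.1 hp.2⟩
  calc (k : ℕ) - (m : ℕ) = (Finset.Ioc m k).card := (Fin.card_Ioc m k).symm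
    _ ≤ _ := Finset.card_le_card hsub
end

section
/- The map sending a permutation ρ = (ρ_1,…,ρ_n) of {1,…,n} to its 321-height vector (h_1,…,h_n) is injective on the set of all permutations of {1,…,n}. -/
open scoped Classical
open Finset

/-- `m` is the last left-to-right maximum of `ρ` strictly before position `i`. -/
def IsLastLRMaxBefore {n : ℕ} (ρ : Equiv.Perm (Fin n)) (m i : Fin n) : Prop :=
  m < i ∧ IsLRMax ρ m ∧ ∀ p, m < p → p < i → ¬ IsLRMax ρ p

/-- The 321-height of entry `i` of `ρ`:  if `ρ i` is a left-to-right maximum, the number of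
entries to the right of `i` that are smaller than `ρ i`; otherwise the number of entries
`ρ k` to the right of `i` with `ρ i < ρ k < ρ m`, where `ρ m` is the last left-to-right
maximum before position `i`. -/
noncomputable def height321 {n : ℕ} (ρ : Equiv.Perm (Fin n)) (i : Fin n) : ℕ :=
  if IsLRMax ρ i then
    (Finset.univ.filter (fun k => i < k ∧ ρ k < ρ i)).card
  else
    (Finset.univ.filter (fun k => i < k ∧ ρ i < ρ k ∧
      ∃ m, IsLastLRMaxBefore ρ m i ∧ ρ k < ρ m)).card

open Finset in
lemma lastLRMax_prefix_lt {n} (ρ : Equiv.Perm (Fin n)) {m i : Fin n}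
    (hm : IsLastLRMaxBefore ρ m i) : ∀ j, j < i → j ≠ m → ρ j < ρ m := by
  obtain ⟨hmi, hmax, hlast⟩ := hm
  have H : ∀ k : ℕ, ∀ j : Fin n, j.val = k → j < i → j ≠ m → ρ j < ρ m := by
    intro k
    induction k using Nat.strong_induction_on with
    | _ k IH =>
      intro j hjk hji hjm
      rcases lt_trichotomy j m with h | h | h
      · exact hmax j h
      · exact absurd h hjm
      · have hnm : ¬ IsLRMax ρ j := hlast j h hji
        simp only [IsLRMax, not_forall] at hnm
        obtain ⟨j', hj'lt, hnotlt⟩ := hnm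
        have hne : ρ j ≠ ρ j' := fun he => (ne_of_lt hj'lt) (ρ.injective he.symm)
        have hlt2 : ρ j < ρ j' := lt_of_le_of_ne (not_lt.mp hnotlt) hne
        rcases eq_or_ne j' m with rfl | hne'
        · exact hlt2
        · exact hlt2.trans (IH j'.val (hjk ▸ hj'lt) j' rfl (hj'lt.trans hji) hne')
  exact fun j => H j.val j rfl

lemma exists_lastLRMax {n} (ρ : Equiv.Perm (Fin n)) {i : Fin n} (hi : ¬ IsLRMax ρ i) :
    ∃ m, IsLastLRMaxBefore ρ m i := by
  have hn : 0 < n := lt_of_le_of_lt (Nat.zero_le _) i.isLt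
  have hi0 : (⟨0, hn⟩ : Fin n) < i := by
    rcases Nat.eq_zero_or_pos i.val with h | h
    · exact absurd (fun j hj => absurd hj (by simp [Fin.lt_def, h])) hi
    · exact Fin.lt_def.mpr h
  set s := univ.filter (fun p : Fin n => p < i ∧ IsLRMax ρ p) with hs
  have hne : s.Nonempty := by
    refine ⟨⟨0, hn⟩, ?_⟩
    simp only [hs, mem_filter, mem_univ, true_and]
    exact ⟨hi0, fun j hj => absurd hj (by simp [Fin.lt_def])⟩
  refine ⟨s.max' hne, ?_, ?_, ?_⟩
  · have := s.max'_mem hne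
    simp only [hs, mem_filter] at this
    exact this.2.1
  · have := s.max'_mem hne
    simp only [hs, mem_filter] at this
    exact this.2.2
  · intro p hmp hpi hmax
    have : p ∈ s := by simp only [hs, mem_filter, mem_univ, true_and]; exact ⟨hpi, hmax⟩
    exact absurd (s.le_max' p this) (not_le.mpr hmp)

lemma lastLRMax_unique {n} {ρ : Equiv.Perm (Fin n)} {m m' i : Fin n}
    (hm : IsLastLRMaxBefore ρ m i) (hm' : IsLastLRMaxBefore ρ m' i) : m = m' := by
  rcases lt_trichotomy m m' with h | h | h
  · exact absurd hm'.2.1 (hm.2.2 m' h hm'.1)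
  · exact h
  · exact absurd hm.2.1 (hm'.2.2 m h hm.1)

lemma card_after {n} (ρ : Equiv.Perm (Fin n)) (i : Fin n) (S : Finset (Fin n)) (hS : ρ i ∉ S) :
    (univ.filter fun k => i < k ∧ ρ k ∈ S).card = (S \ (Iio i).image ρ).card := by
  have himg : (univ.filter fun k => i < k ∧ ρ k ∈ S).image ρ = S \ (Iio i).image ρ := by
    ext v
    simp only [mem_image, mem_filter, mem_univ, true_and, mem_sdiff, mem_Iio]
    constructor
    · rintro ⟨k, ⟨hik, hkS⟩, rfl⟩
      refine ⟨hkS, ?_⟩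
      rintro ⟨j, hj, hjv⟩
      exact absurd (ρ.injective hjv ▸ hj) (not_lt.mpr hik.le)
    · rintro ⟨hvS, hv⟩
      have hki : i < ρ.symm v := by
        rcases lt_trichotomy (ρ.symm v) i with h | h | h
        · exact absurd ⟨ρ.symm v, h, by simp⟩ hv
        · exact absurd (show ρ (ρ.symm v) ∈ S by simp [hvS]) (by rw [h]; exact hS)
        · exact h
      exact ⟨ρ.symm v, ⟨hki, by simp [hvS]⟩, by simp⟩
  rw [← himg, Finset.card_image_of_injective _ ρ.injective]

lemma height_eq_of_max {n} (ρ : Equiv.Perm (Fin n)) (i : Fin n) (h : IsLRMax ρ i) :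
    height321 ρ i = (Iio (ρ i) \ (Iio i).image ρ).card := by
  rw [height321, if_pos h, ← card_after ρ i (Iio (ρ i)) (by simp)]
  congr 1
  ext k
  simp [mem_Iio]

lemma height_eq_of_nonmax {n} (ρ : Equiv.Perm (Fin n)) (i m : Fin n) (h : ¬ IsLRMax ρ i)
    (hm : IsLastLRMaxBefore ρ m i) :
    height321 ρ i = (Ioo (ρ i) (ρ m) \ (Iio i).image ρ).card := by
  rw [height321, if_neg h, ← card_after ρ i (Ioo (ρ i) (ρ m)) (by simp)]
  congr 1
  ext k
  simp only [mem_filter, mem_univ, true_and, mem_Ioo]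
  constructor
  · rintro ⟨hik, h1, m', hm', h2⟩
    exact ⟨hik, h1, lastLRMax_unique hm' hm ▸ h2⟩
  · rintro ⟨hik, h1, h2⟩
    exact ⟨hik, h1, m, hm, h2⟩

lemma isLRMax_congr {n} {ρ σ : Equiv.Perm (Fin n)} {i p : Fin n}
    (hpre : ∀ j, j < i → ρ j = σ j) (hp : p < i) : IsLRMax ρ p ↔ IsLRMax σ p := by
  unfold IsLRMax
  refine forall₂_congr fun j hj => ?_
  rw [hpre j (hj.trans hp), hpre p hp]

lemma lastLRMaxBefore_congr {n} {ρ σ : Equiv.Perm (Fin n)} {i m : Fin n}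
    (hpre : ∀ j, j < i → ρ j = σ j) :
    IsLastLRMaxBefore ρ m i ↔ IsLastLRMaxBefore σ m i := by
  unfold IsLastLRMaxBefore
  constructor
  · rintro ⟨h1, h2, h3⟩
    exact ⟨h1, (isLRMax_congr hpre h1).mp h2,
      fun p hp1 hp2 h => h3 p hp1 hp2 ((isLRMax_congr hpre hp2).mpr h)⟩
  · rintro ⟨h1, h2, h3⟩
    exact ⟨h1, (isLRMax_congr hpre h1).mpr h2,
      fun p hp1 hp2 h => h3 p hp1 hp2 ((isLRMax_congr hpre hp2).mp h)⟩

lemma key {n} (ρ σ : Equiv.Perm (Fin n)) (i : Fin n)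
    (hpre : ∀ j, j < i → ρ j = σ j) (hlt : ρ i < σ i)
    (hh : height321 ρ i = height321 σ i) : False := by
  have hPi : ∀ τ : Equiv.Perm (Fin n), τ i ∉ (Iio i).image τ := by
    intro τ
    simp only [mem_image, mem_Iio, not_exists, not_and]
    intro j hj he
    exact absurd (τ.injective he) (ne_of_lt hj)
  have hP : (Iio i).image ρ = (Iio i).image σ :=
    image_congr fun j hj => hpre j (mem_Iio.mp hj)
  by_cases hρ : IsLRMax ρ i
  · have hσ : IsLRMax σ i := fun j hj => hpre j hj ▸ ((hρ j hj).trans hlt)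
    rw [height_eq_of_max ρ i hρ, height_eq_of_max σ i hσ, hP] at hh
    have hsub : Iio (ρ i) \ (Iio i).image σ ⊂ Iio (σ i) \ (Iio i).image σ := by
      rw [Finset.ssubset_iff_of_subset
        (sdiff_subset_sdiff (Iio_subset_Iio hlt.le) le_rfl)]
      exact ⟨ρ i, mem_sdiff.mpr ⟨mem_Iio.mpr hlt, hP ▸ hPi ρ⟩,
        fun hx => absurd (mem_Iio.mp (mem_sdiff.mp hx).1) (lt_irrefl _)⟩
    exact absurd hh (ne_of_lt (Finset.card_lt_card hsub))
  · obtain ⟨m, hm⟩ := exists_lastLRMax ρ hρ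
    have hMi : ρ i < ρ m := by
      have hρ' := hρ
      simp only [IsLRMax, not_forall] at hρ'
      obtain ⟨j, hj, hnl⟩ := hρ'
      have hne : ρ i ≠ ρ j := fun he => (ne_of_lt hj) (ρ.injective he.symm)
      have h1 : ρ i < ρ j := lt_of_le_of_ne (not_lt.mp hnl) hne
      rcases eq_or_ne j m with rfl | hjm
      · exact h1
      · exact h1.trans (lastLRMax_prefix_lt ρ hm j hj hjm)
    by_cases hσm : IsLRMax σ i
    · rw [height_eq_of_nonmax ρ i m hρ hm, height_eq_of_max σ i hσm, hP] at hh
      have hmσ : ρ m < σ i := hpre m hm.1 ▸ hσm m hm.1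
      have hsub : Ioo (ρ i) (ρ m) \ (Iio i).image σ ⊂ Iio (σ i) \ (Iio i).image σ := by
        rw [Finset.ssubset_iff_of_subset (sdiff_subset_sdiff
          (fun x hx => mem_Iio.mpr ((mem_Ioo.mp hx).2.trans hmσ)) le_rfl)]
        exact ⟨ρ i, mem_sdiff.mpr ⟨mem_Iio.mpr hlt, hP ▸ hPi ρ⟩,
          fun hx => absurd (mem_Ioo.mp (mem_sdiff.mp hx).1).1 (lt_irrefl _)⟩
      exact absurd hh (ne_of_lt (Finset.card_lt_card hsub))
    · have hmσ' : IsLastLRMaxBefore σ m i := (lastLRMaxBefore_congr hpre).mp hm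
      rw [height_eq_of_nonmax ρ i m hρ hm, height_eq_of_nonmax σ i m hσm hmσ', hP,
        ← hpre m hm.1] at hh
      have hσiM : σ i < ρ m := by
        have hσ' := hσm
        simp only [IsLRMax, not_forall] at hσ'
        obtain ⟨j, hj, hnl⟩ := hσ'
        have hne : σ i ≠ σ j := fun he => (ne_of_lt hj) (σ.injective he.symm)
        have h1 : σ i < σ j := lt_of_le_of_ne (not_lt.mp hnl) hne
        rcases eq_or_ne j m with he | hjm
        · rw [he] at h1; rwa [hpre m hm.1]
        · exact h1.trans (hpre j hj ▸ lastLRMax_prefix_lt ρ hm j hj hjm)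
      have hsub : Ioo (σ i) (ρ m) \ (Iio i).image σ ⊂ Ioo (ρ i) (ρ m) \ (Iio i).image σ := by
        rw [Finset.ssubset_iff_of_subset (sdiff_subset_sdiff
          (fun x hx => mem_Ioo.mpr ⟨hlt.trans (mem_Ioo.mp hx).1, (mem_Ioo.mp hx).2⟩) le_rfl)]
        exact ⟨σ i, mem_sdiff.mpr ⟨mem_Ioo.mpr ⟨hlt, hσiM⟩, hPi σ⟩,
          fun hx => absurd (mem_Ioo.mp (mem_sdiff.mp hx).1).1 (lt_irrefl _)⟩
      exact absurd hh.symm (ne_of_lt (Finset.card_lt_card hsub))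

/-- The map sending a permutation `ρ` of {1,…,n} to its 321-height vector is injective. -/
theorem height321_injective (n : ℕ) :
    Function.Injective (fun ρ : Equiv.Perm (Fin n) => fun i : Fin n => height321 ρ i) := by
  intro ρ σ h
  simp only at h
  have hh : ∀ i, height321 ρ i = height321 σ i := fun i => congrFun h i
  have H : ∀ k : ℕ, ∀ i : Fin n, i.val = k → ρ i = σ i := by
    intro k
    induction k using Nat.strong_induction_on with
    | _ k IH =>
      intro i hik
      have hpre : ∀ j, j < i → ρ j = σ j := fun j hj => IH j.val (hik ▸ hj) j rfl
      rcases lt_trichotomy (ρ i) (σ i) with hlt | heq | hgt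
      · exact absurd (hh i) (fun he => key ρ σ i hpre hlt he)
      · exact heq
      · exact absurd (hh i).symm
          (fun he => key σ ρ i (fun j hj => (hpre j hj).symm) hgt he)
  exact Equiv.ext fun i => H i.val i rfl
end

section
/- A permutation ρ = (ρ_1,…,ρ_n) of {1,…,n} avoids the pattern (3,1,2) if and only if its 312-height vector (h_1,…,h_n) satisfies h_i ≤ h_{i+1} + 1 for all 1 ≤ i ≤ n−1. (Equivalently: the path ψ_{(3,1,2)}(ρ) is an ordinary Dyck path, i.e., has no down-jumps, if and only if ρ is (3,1,2)-avoiding.) -/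
/-- The 312-height of entry `i` of `ρ`: the number of entries to the right of `i`
that are smaller than `ρ i`. -/
def height312 {n : ℕ} (ρ : Equiv.Perm (Fin n)) (i : Fin n) : ℕ :=
  (Finset.univ.filter (fun k => i < k ∧ ρ k < ρ i)).card

/-- A permutation avoids the pattern (3,1,2) if and only if its 312-height vector satisfies
`h i ≤ h (i+1) + 1` for all consecutive positions (i.e. the path `ψ_(3,1,2)(ρ)` is an
ordinary Dyck path, without down-jumps). -/
theorem avoids312_iff_height312_no_jump {n : ℕ} (ρ : Equiv.Perm (Fin n)) :
    (∀ a b c : Fin n, a < b → b < c → ¬(ρ b < ρ c ∧ ρ c < ρ a)) ↔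
    (∀ i : ℕ, ∀ hi : i + 1 < n,
      height312 ρ ⟨i, by omega⟩ ≤ height312 ρ ⟨i + 1, hi⟩ + 1) := by
  constructor
  · intro hav i hi
    set a : Fin n := ⟨i, by omega⟩ with ha
    set b : Fin n := ⟨i + 1, hi⟩ with hb
    have hsub : Finset.univ.filter (fun k => a < k ∧ ρ k < ρ a) ⊆
        insert b (Finset.univ.filter (fun k => b < k ∧ ρ k < ρ b)) := by
      intro k hk
      simp only [Finset.mem_filter, Finset.mem_univ, true_and] at hk
      rcases eq_or_ne k b with rfl | hne
      · exact Finset.mem_insert_self _ _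
      · have hbk : b < k := by
          have h1 : (a : ℕ) < k := hk.1
          have h2 : (k : ℕ) ≠ (b : ℕ) := fun h => hne (Fin.ext h)
          simp only [Fin.lt_def, ha, hb] at *
          omega
        have hbk2 : ρ k < ρ b := by
          rcases lt_or_gt_of_ne (fun h => hne (ρ.injective h)) with h | h
          · exact h
          · exact absurd ⟨h, hk.2⟩
              (hav a b k (by simp [Fin.lt_def, ha, hb]) hbk)
        exact Finset.mem_insert_of_mem (by simp [hbk, hbk2])
    calc height312 ρ a
        ≤ (insert b (Finset.univ.filter (fun k => b < k ∧ ρ k < ρ b))).card :=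
          Finset.card_le_card hsub
      _ ≤ height312 ρ b + 1 := Finset.card_insert_le _ _
  · intro hno a b c hab hbc hp
    obtain ⟨h1, h2⟩ := hp
    have key : ∀ d : ℕ, ∀ a b c : Fin n, (b : ℕ) - a = d → a < b → b < c →
        ρ b < ρ c → ρ c < ρ a → False := by
      intro d
      induction d using Nat.strong_induction_on with
      | _ d ih =>
        intro a b c hd hab hbc h1 h2
        rcases eq_or_lt_of_le (show (a : ℕ) + 1 ≤ b from hab) with heq | hlt
        · -- base case : b = a + 1
          have ha1 : (a : ℕ) + 1 < n := by omega
          have hba : ρ b < ρ a := lt_trans h1 h2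
          have hbc' : b ≠ c := ne_of_lt hbc
          set S := Finset.univ.filter (fun k => b < k ∧ ρ k < ρ b) with hS
          have hbS : b ∉ insert c S := by
            simp only [Finset.mem_insert, hS, Finset.mem_filter]
            push_neg
            exact ⟨hbc', fun _ h => absurd h (lt_irrefl b)⟩
          have hcS : c ∉ S := by
            simp only [hS, Finset.mem_filter]
            push_neg
            intro _ _
            exact le_of_lt h1
          have hsub : insert b (insert c S) ⊆
              Finset.univ.filter (fun k => a < k ∧ ρ k < ρ a) := by
            intro k hk
            simp only [Finset.mem_insert, hS, Finset.mem_filter, Finset.mem_univ,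
              true_and] at hk ⊢
            rcases hk with rfl | rfl | ⟨hk1, hk2⟩
            · exact ⟨hab, hba⟩
            · exact ⟨lt_trans hab hbc, h2⟩
            · exact ⟨lt_trans hab hk1, lt_trans hk2 hba⟩
          have hcard : height312 ρ a ≥ S.card + 2 := by
            have := Finset.card_le_card hsub
            rwa [Finset.card_insert_of_notMem hbS,
              Finset.card_insert_of_notMem hcS] at this
          have hkey := hno (a : ℕ) ha1
          have hea : (⟨(a : ℕ), by omega⟩ : Fin n) = a := rfl
          have heb : (⟨(a : ℕ) + 1, ha1⟩ : Fin n) = b := Fin.ext heq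
          rw [hea, heb] at hkey
          have : height312 ρ b = S.card := rfl
          omega
        · -- step : shrink the gap
          have hm : (a : ℕ) + 1 < n := by omega
          set m : Fin n := ⟨(a : ℕ) + 1, hm⟩ with hmdef
          have ham : a < m := by simp [Fin.lt_def, hmdef]
          have hmb : m < b := by
            simp only [Fin.lt_def, hmdef]; omega
          have hmc : m < c := lt_trans hmb hbc
          have hne : ρ m ≠ ρ c := fun h => (ne_of_lt hmc) (ρ.injective h)
          rcases lt_or_gt_of_ne hne with h | h
          · exact ih ((m : ℕ) - a) (by simp [hmdef]; omega) a m c rfl ham hmc h h2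
          · exact ih ((b : ℕ) - m) (by simp [hmdef]; omega) m b c rfl hmb hbc h1 h
    exact key ((b : ℕ) - a) a b c rfl hab hbc h1 h2
end

section
/- Let τ be either the pattern (3,1,2) or the pattern (3,2,1), and let ρ be a permutation of {1,…,n}. (i) If (a,b,c) is an occurrence of τ in ρ and m < b is an index such that ρ_m is a left-to-right maximum with ρ_m > max(ρ_b, ρ_c), then (m,b,c) is also an occurrence of τ in ρ. (ii) Consequently, ρ contains an occurrence of τ if and only if ρ contains an occurrence (a,b,c) of τ in which ρ_a is a left-to-right maximum. -/
/-- Let `τ` be either the pattern (3,1,2) or the pattern (3,2,1).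
(i) If `(a,b,c)` is an occurrence of `τ` in `ρ` and `m < b` is such that `ρ m` is a
left-to-right maximum with `ρ m > max (ρ b) (ρ c)`, then `(m,b,c)` is also an occurrence
of `τ`.  (ii) Consequently, `ρ` contains an occurrence of `τ` if and only if `ρ` contains
an occurrence `(a,b,c)` of `τ` in which `ρ a` is a left-to-right maximum. -/
theorem occurrence_with_LRMax_first {n : ℕ} (ρ : Equiv.Perm (Fin n))
    (Occ : Fin n → Fin n → Fin n → Prop)
    (hOcc : (∀ a b c, Occ a b c ↔ a < b ∧ b < c ∧ ρ b < ρ c ∧ ρ c < ρ a) ∨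
            (∀ a b c, Occ a b c ↔ a < b ∧ b < c ∧ ρ c < ρ b ∧ ρ b < ρ a)) :
    (∀ a b c m, Occ a b c → m < b → IsLRMax ρ m → max (ρ b) (ρ c) < ρ m → Occ m b c) ∧
    ((∃ a b c, Occ a b c) ↔ ∃ a b c, Occ a b c ∧ IsLRMax ρ a) := by
  have part1 : ∀ a b c m, Occ a b c → m < b → IsLRMax ρ m → max (ρ b) (ρ c) < ρ m →
      Occ m b c := by
    intro a b c m habc hmb _ hmax
    rcases hOcc with h | h
    · obtain ⟨_, h2, h3, _⟩ := (h a b c).mp habc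
      exact (h m b c).mpr ⟨hmb, h2, h3, lt_of_le_of_lt (le_max_right _ _) hmax⟩
    · obtain ⟨_, h2, h3, _⟩ := (h a b c).mp habc
      exact (h m b c).mpr ⟨hmb, h2, h3, lt_of_le_of_lt (le_max_left _ _) hmax⟩
  refine ⟨part1, ⟨?_, fun ⟨a, b, c, h, _⟩ => ⟨a, b, c, h⟩⟩⟩
  rintro ⟨a, b, c, habc⟩
  -- take m maximizing ρ over Iic a
  obtain ⟨m, hm, hmmax⟩ := (Finset.Iic a).exists_max_image ρ ⟨a, Finset.mem_Iic.mpr le_rfl⟩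
  have hma : m ≤ a := Finset.mem_Iic.mp hm
  have hρam : ρ a ≤ ρ m := hmmax a (Finset.mem_Iic.mpr le_rfl)
  have hLR : IsLRMax ρ m := by
    intro j hj
    have hle : ρ j ≤ ρ m := hmmax j (Finset.mem_Iic.mpr (le_trans hj.le hma))
    exact lt_of_le_of_ne hle (fun he => (ne_of_lt hj) (ρ.injective he))
  have hab : a < b := by
    rcases hOcc with h | h
    · exact ((h a b c).mp habc).1
    · exact ((h a b c).mp habc).1
  have hmb : m < b := lt_of_le_of_lt hma hab
  have hmax : max (ρ b) (ρ c) < ρ m := by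
    rcases hOcc with h | h
    · obtain ⟨_, _, h3, h4⟩ := (h a b c).mp habc
      exact max_lt (lt_of_lt_of_le (h3.trans h4) hρam) (lt_of_lt_of_le h4 hρam)
    · obtain ⟨_, _, h3, h4⟩ := (h a b c).mp habc
      exact max_lt (lt_of_lt_of_le h4 hρam) (lt_of_lt_of_le (h3.trans h4) hρam)
  exact ⟨m, b, c, part1 a b c m habc hmb hLR hmax, hLR⟩
end

section
/- Let ρ be a permutation of {1,…,n} with 312-height vector (h_1,…,h_n), and suppose ρ has exactly r occurrences of the pattern (3,1,2), where r ≥ 1. Then the total depth of down-jumps s = Σ_{i=1}^{n−1} max(h_i − h_{i+1} − 1, 0) satisfies 1 ≤ s ≤ r. (That is, a permutation with exactly r ≥ 1 occurrences of (3,1,2) is mapped by ψ_{(3,1,2)} to a generalized Dyck path with at least one and at most r down-jumps.) -/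
open Finset

lemma Fin.lt_iff_le_of_val_eq_add_one {n : ℕ} {i j k : Fin n} (hij : (j : ℕ) = i + 1) :
    i < k ↔ j ≤ k := by
  rw [Fin.lt_def, Fin.le_def]
  omega

variable {n : ℕ}

section Height

variable {ρ : Equiv.Perm (Fin n)} {i j : Fin n}

lemma height312_eq_of_lt (hij : (j : ℕ) = i + 1) (hji : ρ j < ρ i) :
    height312 ρ i = height312 ρ j + #{c | j < c ∧ ρ j < ρ c ∧ ρ c < ρ i} + 1 := by
  have hsplit : univ.filter (fun k => i < k ∧ ρ k < ρ i) = insert j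
      (univ.filter (fun k => j < k ∧ ρ k < ρ j) ∪
        univ.filter (fun c => j < c ∧ ρ j < ρ c ∧ ρ c < ρ i)) := by
    ext k
    simp only [mem_filter, mem_univ, true_and, mem_insert, mem_union,
      Fin.lt_iff_le_of_val_eq_add_one hij]
    rcases eq_or_ne k j with rfl | hkj
    · simp [hji]
    · have := ρ.injective.ne hkj
      grind
  rw [height312, hsplit, card_insert_of_notMem (by simp), card_union_of_disjoint]
  · rfl
  · exact disjoint_filter.2 fun c _ h h' => (h.2.trans h'.2.1).false

lemma height312_le_of_lt (hij : (j : ℕ) = i + 1) (hij' : ρ i < ρ j) :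
    height312 ρ i ≤ height312 ρ j := by
  refine card_le_card fun k hk => ?_
  simp only [mem_filter, mem_univ, true_and, Fin.lt_iff_le_of_val_eq_add_one hij] at hk ⊢
  obtain ⟨hjk, hki⟩ := hk
  refine ⟨hjk.lt_of_ne ?_, hki.trans hij'⟩
  rintro rfl
  exact hki.not_gt hij'

lemma height312_sub_height312_sub_one (hij : (j : ℕ) = i + 1) :
    height312 ρ i - height312 ρ j - 1 = #{c | j < c ∧ ρ j < ρ c ∧ ρ c < ρ i} := by
  have hne : ρ i ≠ ρ j := ρ.injective.ne (Fin.ne_of_val_ne (by omega))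
  rcases hne.lt_or_gt with h | h
  · have hempty : #{c | j < c ∧ ρ j < ρ c ∧ ρ c < ρ i} = 0 :=
      card_eq_zero.2 (filter_eq_empty_iff.2 fun c _ hc => (hc.2.1.trans hc.2.2).not_gt h)
    have := height312_le_of_lt hij h
    omega
  · rw [height312_eq_of_lt hij h]
    omega

end Height

section Occurrences

variable (ρ : Equiv.Perm (Fin n))

def occurrences312 : Finset (Fin n × Fin n × Fin n) :=
  univ.filter (fun t => t.1 < t.2.1 ∧ t.2.1 < t.2.2 ∧ ρ t.2.1 < ρ t.2.2 ∧ ρ t.2.2 < ρ t.1)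

def adjacentOccurrences312 : Finset (Fin n × Fin n × Fin n) :=
  (occurrences312 ρ).filter (fun t => (t.2.1 : ℕ) = t.1 + 1)

variable {ρ}

@[simp]
lemma mem_occurrences312 {a b c : Fin n} :
    (a, b, c) ∈ occurrences312 ρ ↔ a < b ∧ b < c ∧ ρ b < ρ c ∧ ρ c < ρ a := by
  simp [occurrences312]

lemma mem_occurrences312_or_of_lt_of_lt {a b c m : Fin n}
    (habc : (a, b, c) ∈ occurrences312 ρ) (ham : a < m) (hmb : m < b) :
    (a, m, c) ∈ occurrences312 ρ ∨ (m, b, c) ∈ occurrences312 ρ := by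
  simp only [mem_occurrences312] at habc ⊢
  have hmc : ρ m ≠ ρ c := ρ.injective.ne (hmb.trans habc.2.1).ne
  rcases hmc.lt_or_gt with h | h
  · exact Or.inl ⟨ham, hmb.trans habc.2.1, h, habc.2.2.2⟩
  · exact Or.inr ⟨hmb, habc.2.1, habc.2.2.1, h⟩

lemma adjacentOccurrences312_nonempty (h : (occurrences312 ρ).Nonempty) :
    (adjacentOccurrences312 ρ).Nonempty := by
  obtain ⟨⟨a, b, c⟩, habc, hmin⟩ :=
    (occurrences312 ρ).exists_min_image (fun t => (t.2.1 : ℕ) - t.1) h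
  refine ⟨(a, b, c), mem_filter.2 ⟨habc, ?_⟩⟩
  have hab : (a : ℕ) < b := (mem_occurrences312.1 habc).1
  by_contra hne
  set m : Fin n := ⟨a + 1, by omega⟩
  have ham : a < m := Fin.lt_def.2 (Nat.lt_succ_self _)
  have hmb : m < b := Fin.lt_def.2 (by simp only [m] at hne ⊢; omega)
  rcases mem_occurrences312_or_of_lt_of_lt habc ham hmb with h' | h' <;>
  · have := hmin _ h'
    simp only [m] at this
    omega

lemma card_filter_adjacentOccurrences312 {i j : Fin n} (hij : (j : ℕ) = i + 1) :
    #{t ∈ adjacentOccurrences312 ρ | (t.1 : ℕ) = i} = #{c | j < c ∧ ρ j < ρ c ∧ ρ c < ρ i} := by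
  refine card_nbij' (fun t => t.2.2) (fun c => (i, j, c)) ?_ ?_ ?_ fun c _ => rfl
  · rintro ⟨a, b, c⟩ h
    simp only [adjacentOccurrences312, coe_filter, mem_filter, Set.mem_ofPred_eq,
      mem_occurrences312, mem_univ, true_and] at h ⊢
    obtain ⟨⟨⟨-, hbc, hbc', hca⟩, hb⟩, ha⟩ := h
    obtain rfl : a = i := Fin.ext ha
    obtain rfl : b = j := Fin.ext (by omega)
    exact ⟨hbc, hbc', hca⟩
  · intro c hc
    simp only [coe_filter, mem_univ, true_and, Set.mem_ofPred_eq, adjacentOccurrences312,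
      mem_filter, mem_occurrences312, and_true] at hc ⊢
    exact ⟨⟨Fin.lt_def.2 (by omega), hc⟩, hij⟩
  · rintro ⟨a, b, c⟩ h
    simp only [adjacentOccurrences312, coe_filter, mem_filter, Set.mem_ofPred_eq,
      mem_occurrences312, Prod.mk.injEq, and_true] at h ⊢
    exact ⟨Fin.ext h.2.symm, Fin.ext (by omega)⟩

lemma sum_downJumps_eq_card_adjacentOccurrences312 (h : ℕ → ℕ)
    (hh : ∀ i : Fin n, h i = height312 ρ i) :
    ∑ i ∈ range (n - 1), (h i - h (i + 1) - 1) = #(adjacentOccurrences312 ρ) := by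
  rw [card_eq_sum_card_fiberwise (f := fun t => (t.1 : ℕ)) (t := range (n - 1))]
  · refine sum_congr rfl fun i hi => ?_
    have hi : i + 1 < n := by rw [mem_range] at hi; omega
    rw [hh ⟨i, by omega⟩, hh ⟨i + 1, hi⟩, height312_sub_height312_sub_one rfl]
    exact (card_filter_adjacentOccurrences312 (i := ⟨i, by omega⟩) rfl).symm
  · rintro ⟨a, b, c⟩ h
    have := (mem_occurrences312.1 (mem_filter.1 h).1).1
    rw [coe_range, Set.mem_Iio]
    change (a : ℕ) < n - 1
    omega

end Occurrences

/-- If `ρ` has exactly `r ≥ 1` occurrences of the pattern (3,1,2), then the total depth of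
down-jumps `s = Σ_{i=1}^{n-1} max (h_i - h_{i+1} - 1) 0` of the path `ψ_(3,1,2)(ρ)`
(computed from the 312-height vector `h`, here via truncated subtraction) satisfies
`1 ≤ s ≤ r`. -/
theorem jumpsum_le_card_occurrences_312 {n r : ℕ} (hr : 1 ≤ r) (ρ : Equiv.Perm (Fin n))
    (h : ℕ → ℕ) (hh : ∀ i : Fin n, h (i : ℕ) = height312 ρ i)
    (hocc : (Finset.univ.filter (fun t : Fin n × Fin n × Fin n =>
        t.1 < t.2.1 ∧ t.2.1 < t.2.2 ∧ ρ t.2.1 < ρ t.2.2 ∧ ρ t.2.2 < ρ t.1)).card = r) :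
    1 ≤ ∑ i ∈ Finset.range (n - 1), (h i - h (i + 1) - 1) ∧
    ∑ i ∈ Finset.range (n - 1), (h i - h (i + 1) - 1) ≤ r := by
  replace hocc : #(occurrences312 ρ) = r := hocc
  rw [sum_downJumps_eq_card_adjacentOccurrences312 h hh, ← hocc]
  have hne : (occurrences312 ρ).Nonempty := card_pos.1 (by omega)
  exact ⟨card_pos.2 (adjacentOccurrences312_nonempty hne), card_le_card (filter_subset _ _)⟩
end

section
/- Let ρ be a permutation of {1,…,n} with 312-height vector (h_1,…,h_n). Suppose that for some index i the path ψ_{(3,1,2)}(ρ) has a jump of depth d ≥ 1 at position i, i.e. d = h_i − h_{i+1} − 1 ≥ 1, which is followed immediately by l ≥ 1 consecutive down-steps, i.e. h_{i+j+1} = h_{i+j} − 1 for all 1 ≤ j ≤ l−1 (with i+l ≤ n). Let r be the largest index with r ≤ i such that ρ_r is a left-to-right maximum (the preceding left-to-right maximum), and let K = {k : i < k ≤ n, ρ_{i+1} < ρ_k < ρ_i}. Then |K| = d, every k ∈ K satisfies k > i + l, and for every 1 ≤ j ≤ l and every k ∈ K the triple (r, i+j, k) is an occurrence of the pattern (3,1,2)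 in ρ (i.e., ρ_r > ρ_k > ρ_{i+j}); this yields exactly d·l occurrences of (3,1,2) of this type. -/
open Finset

section Adjacent

variable {n : ℕ} {p q : Fin n}

lemma Fin.lt_iff_lt_of_val_eq_succ (hpq : (q : ℕ) = p + 1) (k : Fin n) :
    q < k ↔ p < k ∧ k ≠ q := by
  rw [Fin.lt_def, Fin.lt_def, ne_eq, Fin.ext_iff]
  omega

variable (ρ : Equiv.Perm (Fin n))

lemma lt_of_height312_lt (hpq : (q : ℕ) = p + 1) (h : height312 ρ q < height312 ρ p) :
    ρ q < ρ p := by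
  refine lt_of_not_ge fun hle => h.not_ge (card_le_card fun k hk => ?_)
  simp only [mem_filter, mem_univ, true_and] at hk ⊢
  have hpq' : ρ p < ρ q := hle.lt_of_ne (ρ.injective.ne (by simp [Fin.ext_iff, hpq]))
  have hkq : k ≠ q := by rintro rfl; exact hk.2.not_gt hpq'
  exact ⟨(Fin.lt_iff_lt_of_val_eq_succ hpq k).2 ⟨hk.1, hkq⟩, hk.2.trans hpq'⟩

lemma height312_eq_of_descent (hpq : (q : ℕ) = p + 1) (hdesc : ρ q < ρ p) :
    height312 ρ p = height312 ρ q + 1 +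
      #{k | p < k ∧ ρ q < ρ k ∧ ρ k < ρ p} := by
  set below : Finset (Fin n) := {k | q < k ∧ ρ k < ρ q} with hbelow
  set between : Finset (Fin n) := {k | p < k ∧ ρ q < ρ k ∧ ρ k < ρ p} with hbetween
  have hsplit : ({k | p < k ∧ ρ k < ρ p} : Finset (Fin n)) = insert q (below ∪ between) := by
    ext k
    simp only [hbelow, hbetween, mem_insert, mem_union, mem_filter, mem_univ, true_and,
      Fin.lt_iff_lt_of_val_eq_succ hpq k]
    rcases eq_or_ne k q with rfl | hkq
    · simp [hdesc, Fin.lt_def, hpq]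
    · have hρ : ρ k ≠ ρ q := ρ.injective.ne hkq
      constructor
      · rintro ⟨hpk, hkp⟩
        rcases hρ.lt_or_gt with hlt | hgt
        exacts [.inr (.inl ⟨⟨hpk, hkq⟩, hlt⟩), .inr (.inr ⟨hpk, hgt, hkp⟩)]
      · rintro (h | ⟨⟨hpk, -⟩, hlt⟩ | ⟨hpk, -, hkp⟩)
        exacts [absurd h hkq, ⟨hpk, hlt.trans hdesc⟩, ⟨hpk, hkp⟩]
  have hq : q ∉ below ∪ between := by simp [hbelow, hbetween]
  have hdisj : Disjoint below between :=
    disjoint_filter.2 fun k _ hk hk' => hk.2.not_gt hk'.2.1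
  rw [height312, hsplit, card_insert_of_notMem hq, card_union_of_disjoint hdisj]
  change _ = #below + 1 + #between
  omega

end Adjacent

lemma Fin.apply_le_of_forall_adjacent_lt {n : ℕ} {α : Type*} [Preorder α] (f : Fin n → α)
    (a : Fin n) (b : ℕ)
    (hdesc : ∀ p q : Fin n, a ≤ p → (q : ℕ) = p + 1 → (q : ℕ) ≤ b → f q < f p) :
    ∀ p : Fin n, a ≤ p → (p : ℕ) ≤ b → f p ≤ f a := by
  suffices key : ∀ v, (a : ℕ) ≤ v → ∀ hv : v < n, v ≤ b → f ⟨v, hv⟩ ≤ f a from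
    fun p hap hpb => key p hap p.isLt hpb
  intro v hav
  induction v, hav using Nat.le_induction with
  | base => exact fun _ _ => le_rfl
  | succ v hav ih =>
    intro hv hvb
    exact (hdesc ⟨v, by omega⟩ ⟨v + 1, hv⟩ hav rfl hvb).le.trans (ih (by omega) (by omega))

section LRMax

variable {n : ℕ} (ρ : Equiv.Perm (Fin n))

/-- The position of the largest entry among `ρ 0, …, ρ p` is a left-to-right maximum. -/
lemma exists_isLRMax_le_apply_le (p : Fin n) : ∃ q ≤ p, IsLRMax ρ q ∧ ρ p ≤ ρ q := by
  obtain ⟨q, hq, hmax⟩ := (Iic p).exists_max_image ρ ⟨p, mem_Iic.2 le_rfl⟩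
  rw [mem_Iic] at hq
  refine ⟨q, hq, fun j hj => ?_, hmax p (mem_Iic.2 le_rfl)⟩
  exact (hmax j (mem_Iic.2 (hj.le.trans hq))).lt_of_ne (ρ.injective.ne hj.ne)

lemma apply_le_of_isLRMax_of_forall_not_isLRMax {r i : Fin n} (hr : IsLRMax ρ r)
    (hlast : ∀ p, r < p → p ≤ i → ¬ IsLRMax ρ p) : ρ i ≤ ρ r := by
  obtain ⟨q, hqi, hq, hiq⟩ := exists_isLRMax_le_apply_le ρ i
  rcases lt_trichotomy q r with hqr | rfl | hrq
  exacts [hiq.trans (hr q hqr).le, hiq, absurd hq (hlast q hrq hqi)]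

end LRMax

lemma card_filter_Ioc_prod_of_forall {n : ℕ} (i : Fin n) (m : ℕ) (hm : (i : ℕ) + m < n)
    (K : Finset (Fin n)) (P : Fin n → Fin n → Prop) [DecidableRel P]
    (hP : ∀ p : Fin n, i < p → (p : ℕ) ≤ i + m → ∀ k ∈ K, P p k) :
    #{t : Fin n × Fin n | i < t.1 ∧ (t.1 : ℕ) ≤ i + m ∧ t.2 ∈ K ∧ P t.1 t.2} = #K * m := by
  have hpairs : ({t : Fin n × Fin n | i < t.1 ∧ (t.1 : ℕ) ≤ i + m ∧ t.2 ∈ K ∧ P t.1 t.2} :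
      Finset _) = Ioc i ⟨i + m, hm⟩ ×ˢ K := by
    ext ⟨p, k⟩
    simp only [mem_filter, mem_univ, true_and, mem_product, mem_Ioc, Fin.le_def]
    exact ⟨fun ⟨hip, hpm, hk, _⟩ => ⟨⟨hip, hpm⟩, hk⟩,
      fun ⟨⟨hip, hpm⟩, hk⟩ => ⟨hip, hpm, hk, hP p hip hpm k hk⟩⟩
  rw [hpairs, card_product, Fin.card_Ioc, Nat.mul_comm]
  simp

/-- If the path `ψ_(3,1,2)(ρ)` has a jump of depth `d ≥ 1` at position `i`, followed
immediately by `l ≥ 1` consecutive down-steps, `ρ r` is the preceding left-to-right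
maximum, and `K = {k : k > i, ρ (i+1) < ρ k < ρ i}`, then `|K| = d`, every `k ∈ K`
satisfies `k > i + l`, each `(r, i+j, k)` with `1 ≤ j ≤ l` and `k ∈ K` is an occurrence
of (3,1,2), and there are exactly `d·l` occurrences of (3,1,2) of this type. -/
theorem jump_gives_312_occurrences {n : ℕ} (ρ : Equiv.Perm (Fin n)) (d l : ℕ)
    (hl : 1 ≤ l) (i : Fin n) (hil : (i : ℕ) + l < n)
    (h : ℕ → ℕ) (hh : ∀ p : Fin n, h (p : ℕ) = height312 ρ p)
    (hjump : h ((i : ℕ) + 1) + 1 + d = h (i : ℕ))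
    (hdown : ∀ j, 1 ≤ j → j ≤ l - 1 → h ((i : ℕ) + j + 1) + 1 = h ((i : ℕ) + j))
    (r : Fin n) (hr : r ≤ i) (hrmax : IsLRMax ρ r)
    (hrlast : ∀ p, r < p → p ≤ i → ¬ IsLRMax ρ p)
    (K : Finset (Fin n))
    (hK : K = Finset.univ.filter (fun k =>
      i < k ∧ ρ ⟨(i : ℕ) + 1, by omega⟩ < ρ k ∧ ρ k < ρ i)) :
    K.card = d ∧
    (∀ k ∈ K, (i : ℕ) + l < (k : ℕ)) ∧
    (∀ j, ∀ _hj1 : 1 ≤ j, ∀ _hj2 : j ≤ l, ∀ k ∈ K,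
      r < (⟨(i : ℕ) + j, by omega⟩ : Fin n) ∧ (⟨(i : ℕ) + j, by omega⟩ : Fin n) < k ∧
      ρ (⟨(i : ℕ) + j, by omega⟩ : Fin n) < ρ k ∧ ρ k < ρ r) ∧
    (Finset.univ.filter (fun t : Fin n × Fin n =>
      i < t.1 ∧ (t.1 : ℕ) ≤ (i : ℕ) + l ∧ t.2 ∈ K ∧
      r < t.1 ∧ t.1 < t.2 ∧ ρ t.1 < ρ t.2 ∧ ρ t.2 < ρ r)).card = d * l := by
  obtain ⟨i₁, hi₁⟩ : ∃ i₁ : Fin n, (i₁ : ℕ) = i + 1 := ⟨⟨i + 1, by omega⟩, rfl⟩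
  rw [show (⟨i + 1, by omega⟩ : Fin n) = i₁ from Fin.ext hi₁.symm] at hK
  have hdesc : ρ i₁ < ρ i := lt_of_height312_lt ρ hi₁ (by rw [← hh, ← hh, hi₁]; omega)
  have hKd : K.card = d := by
    have := height312_eq_of_descent ρ hi₁ hdesc
    rw [← hh, ← hh, hi₁] at this
    rw [hK]
    omega
  have hrun : ∀ p : Fin n, i₁ ≤ p → (p : ℕ) ≤ i + l → ρ p ≤ ρ i₁ := by
    refine Fin.apply_le_of_forall_adjacent_lt ρ i₁ _ fun p q hp hpq hq => ?_
    rw [Fin.le_def, hi₁] at hp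
    refine lt_of_height312_lt ρ hpq ?_
    have := hdown (p - i) (by omega) (by omega)
    rw [show (i : ℕ) + (p - i) = p by omega, ← hpq, hh, hh] at this
    omega
  have hKmem : ∀ k ∈ K, i < k ∧ ρ i₁ < ρ k ∧ ρ k < ρ i := fun k hk => by
    simpa [hK] using hk
  have hi₁_le : ∀ p : Fin n, i < p → i₁ ≤ p := fun p hp => by
    rw [Fin.le_def, hi₁]; exact hp
  have hKfar : ∀ k ∈ K, (i : ℕ) + l < k := fun k hk => by
    obtain ⟨hik, hk₁, -⟩ := hKmem k hk
    by_contra! hkl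
    exact (hrun k (hi₁_le k hik) hkl).not_gt hk₁
  have hir : ρ i ≤ ρ r := apply_le_of_isLRMax_of_forall_not_isLRMax ρ hrmax hrlast
  have hocc : ∀ p : Fin n, i < p → (p : ℕ) ≤ i + l → ∀ k ∈ K,
      r < p ∧ p < k ∧ ρ p < ρ k ∧ ρ k < ρ r := fun p hip hpl k hk =>
    ⟨hr.trans_lt hip, Fin.lt_def.2 (by have := hKfar k hk; omega),
      (hrun p (hi₁_le p hip) hpl).trans_lt (hKmem k hk).2.1, (hKmem k hk).2.2.trans_le hir⟩
  refine ⟨hKd, hKfar, fun j hj1 hj2 => hocc _ (Fin.lt_def.2 (by dsimp only; omega)) (by dsimp only; omega),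
    ?_⟩
  rw [← hKd]
  exact card_filter_Ioc_prod_of_forall i l hil K
    (fun p k => r < p ∧ p < k ∧ ρ p < ρ k ∧ ρ k < ρ r) hocc
end

section
/- Let ρ be a permutation of {1,…,n} with 312-height vector (h_1,…,h_n). Suppose that the path ψ_{(3,1,2)}(ρ) has a jump of depth d ≥ 1 at position i (d = h_i − h_{i+1} − 1 ≥ 1), followed immediately by l ≥ 1 consecutive down-steps (h_{i+j+1} = h_{i+j} − 1 for 1 ≤ j ≤ l−1, i+l ≤ n), and preceded immediately by m ≥ 1 consecutive down-steps including the preceding left-to-right maximum; that is, h_{p+1} = h_p − 1 for all i−m+1 ≤ p ≤ i−1, the entry ρ_{i−m+1} is a left-to-right maximum, and no ρ_p with i−m+1 < p ≤ i is a left-to-right maximum. Let K = {k : i < k ≤ n, ρ_{i+1} < ρ_k < ρ_i}. Then |K| = d, and for all 1 ≤ g ≤ m, 1 ≤ j ≤ l, and k ∈ K, the triple (i−g+1, i+j, k) is an occurrence of the pattern (3,1,2) in ρ (i.e., ρ_{i−g+1} > ρ_k > ρ_{i+j}); this yields exactly m·d·l occurrences of (3,1,2) of this type. -/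
open Finset

section

variable {n : ℕ} (ρ : Equiv.Perm (Fin n)) {p q : Fin n}

theorem height312_eq_of_covBy (hpq : p ⋖ q) (hq : ρ q < ρ p) :
    height312 ρ p = height312 ρ q + 1 + #{k | p < k ∧ ρ q < ρ k ∧ ρ k < ρ p} := by
  have below : univ.filter (fun k => (p < k ∧ ρ k < ρ p) ∧ ρ k ≤ ρ q) =
      insert q (univ.filter fun k => q < k ∧ ρ k < ρ q) := by
    ext k
    simp only [mem_filter, mem_univ, true_and, mem_insert]
    constructor
    · rintro ⟨⟨hpk, -⟩, hkq⟩
      rcases hkq.lt_or_eq with hkq | hkq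
      · exact .inr ⟨(hpq.ge_of_gt hpk).lt_of_ne (by rintro rfl; exact hkq.false), hkq⟩
      · exact .inl (ρ.injective hkq)
    · rintro (rfl | ⟨hqk, hkq⟩)
      · exact ⟨⟨hpq.lt, hq⟩, le_rfl⟩
      · exact ⟨⟨hpq.lt.trans hqk, hkq.trans hq⟩, hkq.le⟩
  have above : univ.filter (fun k => (p < k ∧ ρ k < ρ p) ∧ ¬ ρ k ≤ ρ q) =
      univ.filter fun k => p < k ∧ ρ q < ρ k ∧ ρ k < ρ p := by
    ext k
    simp only [mem_filter, mem_univ, true_and, not_le]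
    tauto
  rw [height312, ← card_filter_add_card_filter_not (fun k => ρ k ≤ ρ q), filter_filter,
    filter_filter, below, above, card_insert_of_notMem (by simp), height312]

theorem height312_le_of_covBy (hpq : p ⋖ q) (hp : ρ p < ρ q) :
    height312 ρ p ≤ height312 ρ q := by
  refine card_le_card fun k hk => ?_
  simp only [mem_filter, mem_univ, true_and] at hk ⊢
  refine ⟨(hpq.ge_of_gt hk.1).lt_of_ne ?_, hk.2.trans hp⟩
  rintro rfl
  exact (hk.2.trans hp).false

theorem lt_of_height312_lt_of_covBy (hpq : p ⋖ q) (h : height312 ρ q < height312 ρ p) :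
    ρ q < ρ p := by
  refine (lt_or_gt_of_ne fun hpq' => hpq.lt.ne (ρ.injective hpq').symm).resolve_right ?_
  exact fun hp => (height312_le_of_covBy ρ hpq hp).not_gt h

theorem strictAntiOn_Icc_of_height312_succ_lt {a b : Fin n} (h : ℕ → ℕ)
    (hh : ∀ p : Fin n, h p = height312 ρ p) (hstep : ∀ p : ℕ, a ≤ p → p < b → h (p + 1) < h p) :
    StrictAntiOn ρ (Set.Icc a b) :=
  strictAntiOn_of_succ_lt Set.ordConnected_Icc fun p hp hpab hsab => by
    have hcov := Order.covBy_succ_of_not_isMax hp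
    refine lt_of_height312_lt_of_covBy ρ hcov ?_
    rw [Fin.covBy_iff, Nat.covBy_iff_add_one_eq] at hcov
    rw [← hh, ← hh, ← hcov]
    exact hstep p hpab.1 (by have := Fin.le_def.1 hsab.2; omega)

def IsOccurrence312 (a b c : Fin n) : Prop :=
  a < b ∧ b < c ∧ ρ b < ρ c ∧ ρ c < ρ a

instance (a b c : Fin n) : Decidable (IsOccurrence312 ρ a b c) :=
  inferInstanceAs (Decidable (_ ∧ _))

variable {ρ}

theorem lt_of_covBy_of_apply_lt {a b : Fin n} (hrun : StrictAntiOn ρ (Set.Icc a b))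
    (hpq : p ⋖ q) (hap : a ≤ p) (hqb : q ≤ b) {k : Fin n} (hpk : p < k) (hqk : ρ q < ρ k) :
    b < k := by
  by_contra! hkb
  exact (hrun.antitoneOn ⟨hap.trans hpq.lt.le, hqb⟩ ⟨hap.trans hpk.le, hkb⟩
    (hpq.ge_of_gt hpk)).not_gt hqk

theorem isOccurrence312_of_covBy {a b : Fin n} (hrun : StrictAntiOn ρ (Set.Icc a b))
    (hpq : p ⋖ q) {s t k : Fin n} (hs : s ∈ Set.Icc a p) (ht : t ∈ Set.Icc q b) (hpk : p < k)
    (hqk : ρ q < ρ k) (hkp : ρ k < ρ p) : IsOccurrence312 ρ s t k := by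
  have hq : q ∈ Set.Icc a b := ⟨hs.1.trans (hs.2.trans hpq.lt.le), ht.1.trans ht.2⟩
  have hp : p ∈ Set.Icc a b := ⟨hs.1.trans hs.2, hpq.lt.le.trans hq.2⟩
  refine ⟨hs.2.trans_lt (hpq.lt.trans_le ht.1),
    ht.2.trans_lt (lt_of_covBy_of_apply_lt hrun hpq hp.1 hq.2 hpk hqk), ?_, ?_⟩
  · exact (hrun.antitoneOn hq ⟨hq.1.trans ht.1, ht.2⟩ ht.1).trans_lt hqk
  · exact hkp.trans_le (hrun.antitoneOn ⟨hs.1, hs.2.trans hp.2⟩ hp hs.2)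

end

theorem card_filter_mem_product_of_forall {α β γ : Type*} [Fintype α] [Fintype β] [Fintype γ]
    [DecidableEq α] [DecidableEq β] [DecidableEq γ] (S : Finset α) (T : Finset β)
    (U : Finset γ) (R : α → β → γ → Prop) [∀ a b c, Decidable (R a b c)]
    (hR : ∀ a ∈ S, ∀ b ∈ T, ∀ c ∈ U, R a b c) :
    #{x : α × β × γ | x.1 ∈ S ∧ x.2.1 ∈ T ∧ x.2.2 ∈ U ∧ R x.1 x.2.1 x.2.2} = #S * #T * #U := by
  rw [mul_assoc, ← card_product, ← card_product]
  congr 1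
  ext ⟨a, b, c⟩
  simp only [mem_filter, mem_univ, true_and, mem_product]
  exact ⟨fun h => ⟨h.1, h.2.1, h.2.2.1⟩, fun h => ⟨h.1, h.2.1, h.2.2, hR a h.1 b h.2.1 c h.2.2⟩⟩

/-- If the path `ψ_(3,1,2)(ρ)` has a jump of depth `d ≥ 1` at position `i`, followed
immediately by `l ≥ 1` consecutive down-steps and preceded immediately by `m ≥ 1`
consecutive down-steps including the preceding left-to-right maximum (which is the entry
at position `i - m + 1`), and `K = {k : k > i, ρ (i+1) < ρ k < ρ i}`, then `|K| = d`, each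
triple `(i-g+1, i+j, k)` with `1 ≤ g ≤ m`, `1 ≤ j ≤ l`, `k ∈ K` is an occurrence of
(3,1,2), and there are exactly `m·d·l` occurrences of (3,1,2) of this type. -/
theorem jump_with_preceding_downsteps_gives_312_occurrences {n : ℕ}
    (ρ : Equiv.Perm (Fin n)) (d l m : ℕ)
    (hl : 1 ≤ l) (hm : 1 ≤ m)
    (i : Fin n) (hil : (i : ℕ) + l < n) (hmi : m ≤ (i : ℕ) + 1)
    (h : ℕ → ℕ) (hh : ∀ p : Fin n, h (p : ℕ) = height312 ρ p)
    (hjump : h ((i : ℕ) + 1) + 1 + d = h (i : ℕ))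
    (hdown : ∀ j, 1 ≤ j → j ≤ l - 1 → h ((i : ℕ) + j + 1) + 1 = h ((i : ℕ) + j))
    (hdownpre : ∀ p, (i : ℕ) + 1 ≤ p + m → p + 1 ≤ (i : ℕ) → h (p + 1) + 1 = h p)
    (K : Finset (Fin n))
    (hK : K = Finset.univ.filter (fun k =>
      i < k ∧ ρ ⟨(i : ℕ) + 1, by omega⟩ < ρ k ∧ ρ k < ρ i)) :
    K.card = d ∧
    (∀ g, ∀ _hg1 : 1 ≤ g, ∀ _hg2 : g ≤ m, ∀ j, ∀ _hj1 : 1 ≤ j, ∀ _hj2 : j ≤ l, ∀ k ∈ K,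
      (⟨(i : ℕ) + 1 - g, by omega⟩ : Fin n) < (⟨(i : ℕ) + j, by omega⟩ : Fin n) ∧
      (⟨(i : ℕ) + j, by omega⟩ : Fin n) < k ∧
      ρ (⟨(i : ℕ) + j, by omega⟩ : Fin n) < ρ k ∧
      ρ k < ρ (⟨(i : ℕ) + 1 - g, by omega⟩ : Fin n)) ∧
    (Finset.univ.filter (fun t : Fin n × Fin n × Fin n =>
      (i : ℕ) < (t.1 : ℕ) + m ∧ t.1 ≤ i ∧
      i < t.2.1 ∧ (t.2.1 : ℕ) ≤ (i : ℕ) + l ∧ t.2.2 ∈ K ∧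
      t.1 < t.2.1 ∧ t.2.1 < t.2.2 ∧
      ρ t.2.1 < ρ t.2.2 ∧ ρ t.2.2 < ρ t.1)).card = m * d * l := by
  set a : Fin n := ⟨i + 1 - m, by omega⟩
  set i' : Fin n := ⟨i + 1, by omega⟩
  set b : Fin n := ⟨i + l, hil⟩
  have hii' : i ⋖ i' := by simp [i', Fin.covBy_iff]
  have hrun : StrictAntiOn ρ (Set.Icc a b) := by
    refine strictAntiOn_Icc_of_height312_succ_lt ρ h hh fun p hap hpb => ?_
    simp only [a, b] at hap hpb
    rcases lt_trichotomy p i with hpi | rfl | hpi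
    · have := hdownpre p (by omega) (by omega); omega
    · omega
    · have := hdown (p - i) (by omega) (by omega)
      rw [show (i : ℕ) + (p - i) = p by omega] at this; omega
  have hi'i : ρ i' < ρ i := by
    refine hrun ?_ ?_ hii'.lt <;> simp only [Set.mem_Icc, Fin.le_def, a, i', b] <;> omega
  have hcard : K.card = d := by
    have hsplit := height312_eq_of_covBy ρ hii' hi'i
    rw [← hh i, ← show h (i + 1) = height312 ρ i' from hh i', ← hK] at hsplit
    omega
  have hocc : ∀ s ∈ Icc a i, ∀ t ∈ Icc i' b, ∀ k ∈ K, IsOccurrence312 ρ s t k := by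
    intro s hs t ht k hk
    obtain ⟨hik, hi'k, hki⟩ := (mem_filter.1 (hK ▸ hk)).2
    exact isOccurrence312_of_covBy hrun hii' (mem_Icc.1 hs) (mem_Icc.1 ht) hik hi'k hki
  refine ⟨hcard, fun g _ _ j _ _ k hk => hocc _ ?_ _ ?_ k hk, ?_⟩
  · simp only [mem_Icc, Fin.le_def, a]; omega
  · simp only [mem_Icc, Fin.le_def, i', b]; omega
  calc _ = #{x : Fin n × Fin n × Fin n | x.1 ∈ Icc a i ∧ x.2.1 ∈ Icc i' b ∧ x.2.2 ∈ K ∧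
          IsOccurrence312 ρ x.1 x.2.1 x.2.2} := by
        congr 1
        refine filter_congr fun x _ => ?_
        simp only [mem_Icc, Fin.le_def, Fin.lt_def, IsOccurrence312, a, i', b]
        grind
    _ = #(Icc a i) * #(Icc i' b) * #K := card_filter_mem_product_of_forall _ _ _ _ hocc
    _ = m * d * l := by
        simp only [Fin.card_Icc, hcard, a, i', b]
        rw [Nat.sub_sub_self hmi, show (i : ℕ) + l + 1 - (i + 1) = l by omega]
        ring
end

section
/- Let ρ be a permutation of {1,…,n} with 321-height vector (h_1,…,h_n). Suppose the path ψ_{(3,2,1)}(ρ) has its first jump at position i, of depth d ≥ 1, followed immediately by a maximal run of l ≥ 1 consecutive down-steps; that is: h_q ≤ h_{q+1} + 1 for all q < i, d = h_i − h_{i+1} − 1 ≥ 1, h_{i+j+1} = h_{i+j} − 1 for 1 ≤ j ≤ l−1, and either i+l = n or h_{i+l+1} ≠ h_{i+l} − 1. Let i_1 < i_2 < … < i_r ≤ i be the positions of all left-to-right maxima of ρ that are weakly to the left of the jump, and for 1 ≤ g ≤ r set H_g = #{k : i_g < k ≤ n, ρ_k < ρ_{i_g}} and s_g = #{p : i_g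 < p ≤ i, ρ_p is not a left-to-right maximum}. Let K = {k : i < k ≤ n, ρ_k < ρ_{i+1}}, so |K| = d. Then the number of occurrences (a,b,c) of the pattern (3,2,1) in ρ with a = i_g for some g, i < b ≤ i+l, and c ∈ K equals d · Σ_{g=1}^{r} max(0, min(H_g − d − s_g, l)). -/
open scoped Classical

/-!
Write `h` for the height vector. If `p = q + 1` is not a left-to-right maximum and `q` is a
left-to-right maximum or a right-to-left minimum, then
`h q = h p + 1 + #{k > q | ρ k < ρ p}`. By induction, before the first jump every
non-left-to-right maximum is therefore a right-to-left minimum; applied at `q = i`, the jump depth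
is `|K|`. A down-step after a non-left-to-right maximum `q` forces `ρ q < ρ (q + 1)` with no later
entry in between, so the entries of the run increase from `ρ (i + 1)` and each later entry above
`ρ (i + 1)` lies above all of them. Hence every `c ∈ K` lies right of the run and below it, the
occurrences factor as (pairs `a`, `b`) × `K`, and for each `a` the number of run entries below
`ρ a` is `min(|T|, l)` with `T = {k > i | ρ (i + 1) ≤ ρ k < ρ a}`; splitting the entries below
`ρ a` at position `i` and at the value `ρ (i + 1)` gives `|T| = H - d - s`.
-/

open Finset

def IsRLMin {n : ℕ} (ρ : Equiv.Perm (Fin n)) (p : Fin n) : Prop :=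
  ∀ k, p < k → ρ p < ρ k

theorem Finset.card_eq_min_of_subset {α : Type*} {s t u : Finset α} (hst : s ⊆ t) (hsu : s ⊆ u)
    (h : #s < #u → t ⊆ s) : #s = min #t #u := by
  rcases (card_le_card hsu).lt_or_eq with hlt | heq
  · have := card_le_card (h hlt)
    have := card_le_card hst
    omega
  · have := card_le_card hst
    omega

theorem Fin.lt_iff_eq_or_lt_of_val_eq_succ {n : ℕ} {q p k : Fin n} (hqp : p.val = q.val + 1) :
    q < k ↔ k = p ∨ p < k := by
  simp only [Fin.lt_def, Fin.ext_iff]; omega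

section Heights

variable {n : ℕ} (ρ : Equiv.Perm (Fin n))

/-- The position of the largest entry left of `p` is the last left-to-right maximum before `p`. -/
theorem exists_isLastLRMaxBefore_of_lt {j p : Fin n} (hjp : j < p) :
    ∃ m, IsLastLRMaxBefore ρ m p ∧ ∀ j < p, ρ j ≤ ρ m := by
  obtain ⟨m, hm, hmax⟩ := exists_max_image (univ.filter (· < p)) ρ ⟨j, by simpa using hjp⟩
  simp only [mem_filter, mem_univ, true_and] at hm hmax
  refine ⟨m, ⟨hm, fun x hx => (hmax x (hx.trans hm)).lt_of_ne (ρ.injective.ne hx.ne), ?_⟩, hmax⟩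
  intro x hmx hxp hx
  exact (hx m hmx).not_ge (hmax x hxp)

theorem IsLastLRMaxBefore.eq {m m' p : Fin n} (hm : IsLastLRMaxBefore ρ m p)
    (hm' : IsLastLRMaxBefore ρ m' p) : m = m' := by
  rcases lt_trichotomy m m' with h | h | h
  · exact absurd hm'.2.1 (hm.2.2 m' h hm'.1)
  · exact h
  · exact absurd hm.2.1 (hm'.2.2 m h hm.1)

theorem IsLastLRMaxBefore.apply_le {m p j : Fin n} (hm : IsLastLRMaxBefore ρ m p) (hj : j < p) :
    ρ j ≤ ρ m := by
  obtain ⟨m', hm', hmax⟩ := exists_isLastLRMaxBefore_of_lt ρ hj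
  exact (hm'.eq ρ hm) ▸ hmax j hj

theorem IsLastLRMaxBefore.apply_lt {m p : Fin n} (hm : IsLastLRMaxBefore ρ m p)
    (hp : ¬ IsLRMax ρ p) : ρ p < ρ m := by
  simp only [IsLRMax, not_forall, not_lt] at hp
  obtain ⟨j, hj, hpj⟩ := hp
  exact (hpj.trans (hm.apply_le ρ hj)).lt_of_ne (ρ.injective.ne hm.1.ne')

theorem exists_isLastLRMaxBefore {p : Fin n} (hp : ¬ IsLRMax ρ p) :
    ∃ m, IsLastLRMaxBefore ρ m p := by
  simp only [IsLRMax, not_forall] at hp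
  obtain ⟨j, hj, -⟩ := hp
  exact (exists_isLastLRMaxBefore_of_lt ρ hj).imp fun _ h => h.1

theorem IsLastLRMaxBefore.succ {m q p : Fin n} (hm : IsLastLRMaxBefore ρ m q)
    (hq : ¬ IsLRMax ρ q) (hqp : p.val = q.val + 1) : IsLastLRMaxBefore ρ m p := by
  refine ⟨hm.1.trans (Fin.lt_def.2 (by omega)), hm.2.1, fun x hmx hxp => ?_⟩
  rcases eq_or_ne x q with rfl | hxq
  · exact hq
  · exact hm.2.2 x hmx (Fin.lt_def.2 (by have := Fin.val_ne_of_ne hxq; omega))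

theorem height321_of_isLRMax {p : Fin n} (hp : IsLRMax ρ p) :
    height321 ρ p = #{k | p < k ∧ ρ k < ρ p} := by
  rw [height321, if_pos hp]

theorem height321_of_isLastLRMaxBefore {m p : Fin n} (hp : ¬ IsLRMax ρ p)
    (hm : IsLastLRMaxBefore ρ m p) :
    height321 ρ p = #{k | p < k ∧ ρ p < ρ k ∧ ρ k < ρ m} := by
  rw [height321, if_neg hp]
  refine congrArg card (filter_congr fun k _ => ?_)
  exact and_congr_right fun _ => and_congr_right fun _ =>
    ⟨fun ⟨m', hm', h⟩ => hm'.eq ρ hm ▸ h, fun h => ⟨m, hm, h⟩⟩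

theorem card_filter_succ_split {q p : Fin n} (hqp : p.val = q.val + 1) (P : Fin n → Prop)
    [DecidablePred P] (hP : P p) :
    #{k | q < k ∧ P k} =
      #{k | p < k ∧ P k ∧ ρ p < ρ k} + 1 + #{k | q < k ∧ P k ∧ ρ k < ρ p} := by
  rw [← card_filter_add_card_filter_not (p := fun k => ρ k < ρ p), filter_filter, filter_filter,
    add_comm, ← card_insert_of_notMem (s := {k | p < k ∧ P k ∧ ρ p < ρ k}) (a := p) (by simp)]
  simp only [and_assoc]
  congr 2
  ext k
  simp only [mem_insert, mem_filter, mem_univ, true_and, Fin.lt_iff_eq_or_lt_of_val_eq_succ hqp,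
    not_lt]
  constructor
  · rintro ⟨rfl | hk, hPk, hpk⟩
    · exact Or.inl rfl
    · exact Or.inr ⟨hk, hPk, hpk.lt_of_ne (ρ.injective.ne hk.ne)⟩
  · rintro (rfl | ⟨hk, hPk, hpk⟩)
    · exact ⟨Or.inl rfl, hP, le_rfl⟩
    · exact ⟨Or.inr hk, hPk, hpk.le⟩

theorem height321_le_of_isLRMax_succ {q p : Fin n} (hqp : p.val = q.val + 1)
    (hp : IsLRMax ρ p) : height321 ρ q ≤ height321 ρ p := by
  have hq_lt : ∀ k, q < k → k ≠ p → p < k := fun k hk =>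
    ((Fin.lt_iff_eq_or_lt_of_val_eq_succ hqp).1 hk).resolve_left
  have hqp' : q < p := Fin.lt_def.2 (by omega)
  rw [height321_of_isLRMax ρ hp]
  by_cases hq : IsLRMax ρ q
  · rw [height321_of_isLRMax ρ hq]
    refine card_le_card fun k => ?_
    simp only [mem_filter, mem_univ, true_and]
    exact fun ⟨hk, hkq⟩ => ⟨hq_lt k hk (by rintro rfl; exact hkq.asymm (hp q hqp')),
      hkq.trans (hp q hqp')⟩
  · obtain ⟨m, hm⟩ := exists_isLastLRMaxBefore ρ hq
    have hmp : ρ m < ρ p := hp m (hm.1.trans hqp')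
    rw [height321_of_isLastLRMaxBefore ρ hq hm]
    refine card_le_card fun k => ?_
    simp only [mem_filter, mem_univ, true_and]
    exact fun ⟨hk, _, hkm⟩ => ⟨hq_lt k hk (by rintro rfl; exact hkm.asymm hmp), hkm.trans hmp⟩

/-- Under either hypothesis on `q`, both heights are counted below the same left-to-right
maximum. -/
theorem height321_eq_height321_succ_add {q p : Fin n} (hqp : p.val = q.val + 1)
    (hp : ¬ IsLRMax ρ p) (hq : IsLRMax ρ q ∨ IsRLMin ρ q) :
    height321 ρ q = height321 ρ p + 1 + #{k | q < k ∧ ρ k < ρ p} := by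
  obtain ⟨m, hm, hqm⟩ : ∃ m, IsLastLRMaxBefore ρ m p ∧
      height321 ρ q = #{k | q < k ∧ ρ k < ρ m} := by
    by_cases hqL : IsLRMax ρ q
    · refine ⟨q, ⟨Fin.lt_def.2 (by omega), hqL, fun x hqx hxp => ?_⟩,
        height321_of_isLRMax ρ hqL⟩
      rw [Fin.lt_def] at hqx hxp; omega
    · obtain ⟨m, hm⟩ := exists_isLastLRMaxBefore ρ hqL
      refine ⟨m, hm.succ ρ hqL hqp, ?_⟩
      rw [height321_of_isLastLRMaxBefore ρ hqL hm]
      exact congrArg card (filter_congr fun k _ =>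
        ⟨fun h => ⟨h.1, h.2.2⟩, fun h => ⟨h.1, hq.resolve_left hqL k h.1, h.2⟩⟩)
  have hpm := hm.apply_lt ρ hp
  rw [hqm, card_filter_succ_split ρ hqp _ hpm, height321_of_isLastLRMaxBefore ρ hp hm]
  congr 2
  · exact congrArg card (filter_congr fun k _ => and_congr_right fun _ => and_comm)
  · exact filter_congr fun k _ => and_congr_right fun _ =>
      ⟨fun h => h.2, fun h => ⟨h.trans hpm, h⟩⟩

theorem step_of_height321_succ_add_one {q p : Fin n} (hqp : p.val = q.val + 1)
    (hq : ¬ IsLRMax ρ q) (hstep : height321 ρ p + 1 = height321 ρ q) :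
    ¬ IsLRMax ρ p ∧ ρ q < ρ p ∧ ∀ k, p < k → ρ q < ρ k → ρ p < ρ k := by
  have hp : ¬ IsLRMax ρ p := fun hp => by
    have := height321_le_of_isLRMax_succ ρ hqp hp; omega
  obtain ⟨m, hm⟩ := exists_isLastLRMaxBefore ρ hq
  have hm' := hm.succ ρ hq hqp
  have hqp_lt : q < p := Fin.lt_def.2 (by omega)
  have hq_lt : ∀ k, q < k → k ≠ p → p < k := fun k hk =>
    ((Fin.lt_iff_eq_or_lt_of_val_eq_succ hqp).1 hk).resolve_left
  have hqp_val : ρ q < ρ p := by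
    by_contra! hpq
    replace hpq := hpq.lt_of_ne (ρ.injective.ne hqp_lt.ne')
    have : height321 ρ q ≤ height321 ρ p := by
      rw [height321_of_isLastLRMaxBefore ρ hq hm, height321_of_isLastLRMaxBefore ρ hp hm']
      refine card_le_card fun k => ?_
      simp only [mem_filter, mem_univ, true_and]
      exact fun ⟨hk, hqk, hkm⟩ =>
        ⟨hq_lt k hk (by rintro rfl; exact hqk.asymm hpq), hpq.trans hqk, hkm⟩
    omega
  have hpm := hm'.apply_lt ρ hp
  have hsplit := card_filter_succ_split ρ hqp (fun k => ρ q < ρ k ∧ ρ k < ρ m) ⟨hqp_val, hpm⟩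
  have hmid : #{k | p < k ∧ (ρ q < ρ k ∧ ρ k < ρ m) ∧ ρ p < ρ k} = height321 ρ p := by
    rw [height321_of_isLastLRMaxBefore ρ hp hm']
    exact congrArg card (filter_congr fun k _ => and_congr_right fun _ =>
      ⟨fun h => ⟨h.2, h.1.2⟩, fun h => ⟨⟨hqp_val.trans h.1, h.2⟩, h.1⟩⟩)
  rw [← height321_of_isLastLRMaxBefore ρ hq hm, hmid] at hsplit
  have hbetween := filter_eq_empty_iff.1 (card_eq_zero.1 (by omega : #{k | q < k ∧
    (ρ q < ρ k ∧ ρ k < ρ m) ∧ ρ k < ρ p} = 0))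
  refine ⟨hp, hqp_val, fun k hpk hqk => ?_⟩
  by_contra! hkp
  have hkp := hkp.lt_of_ne (ρ.injective.ne hpk.ne')
  exact hbetween (mem_univ k) ⟨hqp_lt.trans hpk, ⟨hqk, hkp.trans hpm⟩, hkp⟩

theorem card_triples_eq_sum (A B K : Finset (Fin n)) (hAB : ∀ a ∈ A, ∀ b ∈ B, a < b)
    (hBK : ∀ b ∈ B, ∀ c ∈ K, b < c ∧ ρ c < ρ b) :
    #{t : Fin n × Fin n × Fin n | t.1 ∈ A ∧ t.2.1 ∈ B ∧ t.2.2 ∈ K ∧ t.1 < t.2.1 ∧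
      t.2.1 < t.2.2 ∧ ρ t.2.2 < ρ t.2.1 ∧ ρ t.2.1 < ρ t.1} =
      ∑ a ∈ A, #{b ∈ B | ρ b < ρ a} * #K := by
  have hfilter : ({t : Fin n × Fin n × Fin n | t.1 ∈ A ∧ t.2.1 ∈ B ∧ t.2.2 ∈ K ∧ t.1 < t.2.1 ∧
      t.2.1 < t.2.2 ∧ ρ t.2.2 < ρ t.2.1 ∧ ρ t.2.1 < ρ t.1} : Finset _) =
      (A ×ˢ (B ×ˢ K)).filter (fun t => ρ t.2.1 < ρ t.1) := by
    ext ⟨a, b, c⟩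
    simp only [mem_filter, mem_univ, true_and, mem_product]
    constructor
    · exact fun ⟨ha, hb, hc, _, _, _, hba⟩ => ⟨⟨ha, hb, hc⟩, hba⟩
    · exact fun ⟨⟨ha, hb, hc⟩, hba⟩ =>
        ⟨ha, hb, hc, hAB a ha b hb, (hBK b hb c hc).1, (hBK b hb c hc).2, hba⟩
  rw [hfilter, card_filter, sum_product]
  refine sum_congr rfl fun a _ => ?_
  rw [← card_filter, filter_product_left (fun b => ρ b < ρ a), card_product]

end Heights

section FirstJump

variable {n : ℕ} (ρ : Equiv.Perm (Fin n)) {i j : Fin n} {l : ℕ}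

/-- By `height321_eq_height321_succ_add`, the absence of a jump at `p - 1` means that no entry
right of `p` lies below `ρ p`. -/
theorem isRLMin_of_forall_height321_le
    (hnj : ∀ q p : Fin n, p.val = q.val + 1 → p ≤ i → height321 ρ q ≤ height321 ρ p + 1)
    {p : Fin n} (hpi : p ≤ i) (hp : ¬ IsLRMax ρ p) : IsRLMin ρ p := by
  induction p using WellFoundedLT.induction with
  | _ p ih =>
  obtain ⟨j, hjp, -⟩ : ∃ j, j < p ∧ ¬ ρ j < ρ p := by simpa [IsLRMax] using hp
  set q : Fin n := ⟨p.val - 1, by omega⟩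
  have hqp : p.val = q.val + 1 := by simp only [q]; rw [Fin.lt_def] at hjp; omega
  have hq_lt : q < p := Fin.lt_def.2 (by omega)
  have hq : IsLRMax ρ q ∨ IsRLMin ρ q :=
    or_iff_not_imp_left.2 (ih q hq_lt (hq_lt.le.trans hpi))
  have hbelow : #{k | q < k ∧ ρ k < ρ p} = 0 := by
    have := height321_eq_height321_succ_add ρ hqp hp hq
    have := hnj q p hqp hpi
    omega
  intro k hpk
  by_contra! hkp
  exact filter_eq_empty_iff.1 (card_eq_zero.1 hbelow) (mem_univ k)
    ⟨hq_lt.trans hpk, hkp.lt_of_ne (ρ.injective.ne hpk.ne')⟩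

theorem downRun_invariant (hij : j.val = i.val + 1) (hj : ¬ IsLRMax ρ j)
    (hdown : ∀ q p : Fin n, p.val = q.val + 1 → i < q → p.val ≤ i.val + l →
      height321 ρ p + 1 = height321 ρ q)
    {b : Fin n} (hib : i < b) (hbl : b.val ≤ i.val + l) :
    ¬ IsLRMax ρ b ∧ ρ j ≤ ρ b ∧ ∀ k, b < k → ρ j < ρ k → ρ b < ρ k := by
  induction b using WellFoundedLT.induction with
  | _ b ih =>
  rw [Fin.lt_def] at hib
  rcases (show j.val ≤ b.val by omega).eq_or_lt with hjb | hjb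
  · obtain rfl : j = b := Fin.ext hjb
    exact ⟨hj, le_rfl, fun _ _ h => h⟩
  set q : Fin n := ⟨b.val - 1, by omega⟩
  have hqb : b.val = q.val + 1 := by simp only [q]; omega
  obtain ⟨hqL, hjq, hqgap⟩ :=
    ih q (Fin.lt_def.2 (by omega)) (Fin.lt_def.2 (by simp only [q]; omega)) (by omega)
  obtain ⟨hbL, hqb_lt, hbgap⟩ := step_of_height321_succ_add_one ρ hqb hqL
    (hdown q b hqb (Fin.lt_def.2 (by simp only [q]; omega)) hbl)
  refine ⟨hbL, hjq.trans hqb_lt.le, fun k hbk hjk => hbgap k hbk (hqgap k ?_ hjk)⟩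
  exact (Fin.lt_def.2 (by omega)).trans hbk

theorem card_filter_run_lt_eq_min (hil : i.val + l < n) (hij : j.val = i.val + 1)
    (hrun : ∀ b : Fin n, i < b → b.val ≤ i.val + l →
      ρ j ≤ ρ b ∧ ∀ k, b < k → ρ j < ρ k → ρ b < ρ k) (c : Fin n) :
    #{b | i < b ∧ b.val ≤ i.val + l ∧ ρ b < c} =
      min #{k | i < k ∧ ρ j ≤ ρ k ∧ ρ k < c} l := by
  have hrun_card : #{b : Fin n | i < b ∧ b.val ≤ i.val + l} = l := by
    have : ({b : Fin n | i < b ∧ b.val ≤ i.val + l} : Finset _) = Ioc i ⟨i.val + l, hil⟩ := by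
      ext b; simp [Fin.le_def]
    rw [this, Fin.card_Ioc, Fin.val_mk]
    omega
  conv_rhs => rw [← hrun_card]
  refine card_eq_min_of_subset ?_ ?_ fun hlt => ?_
  · intro b
    simp only [mem_filter, mem_univ, true_and]
    exact fun ⟨hib, hbl, hbc⟩ => ⟨hib, (hrun b hib hbl).1, hbc⟩
  · intro b
    simp only [mem_filter, mem_univ, true_and]
    exact fun ⟨hib, hbl, _⟩ => ⟨hib, hbl⟩
  obtain ⟨b, hb, hbc⟩ := exists_mem_notMem_of_card_lt_card hlt
  simp only [mem_filter, mem_univ, true_and, not_and, not_lt] at hb hbc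
  intro k
  simp only [mem_filter, mem_univ, true_and]
  rintro ⟨hik, hjk, hkc⟩
  refine ⟨hik, ?_, hkc⟩
  by_contra! hkl
  have hjk' : ρ j < ρ k := hjk.lt_of_ne (ρ.injective.ne (Fin.ne_of_val_ne (by omega)))
  have := (hrun b hb.1 hb.2).2 k (Fin.lt_def.2 (by omega)) hjk'
  exact (hkc.trans_le (hbc hb.1 hb.2)).not_gt this

/-- Split the entries right of `a` and below `ρ a` at the position `i` and at the value `ρ j`.
If `ρ j < ρ a`, those up to `i` are exactly the non-left-to-right maxima in `(a, i]` (they are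
right-to-left minima, hence below `ρ j`); otherwise the right-hand side is empty. -/
theorem card_sub_sub_eq_card (hij : j.val = i.val + 1)
    (hrl : ∀ p ≤ i, ¬ IsLRMax ρ p → IsRLMin ρ p) {a : Fin n} (hai : a ≤ i) :
    #{k | a < k ∧ ρ k < ρ a} - #{k | i < k ∧ ρ k < ρ j} - #{p | a < p ∧ p ≤ i ∧ ¬ IsLRMax ρ p} =
      #{k | i < k ∧ ρ j ≤ ρ k ∧ ρ k < ρ a} := by
  have hij_lt : i < j := Fin.lt_def.2 (by omega)
  have hright : #{k | a < k ∧ ρ k < ρ a} =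
      #{k | a < k ∧ ρ k < ρ a ∧ k ≤ i} + #{k | i < k ∧ ρ k < ρ a} := by
    rw [← card_filter_add_card_filter_not (p := (· ≤ i)), filter_filter, filter_filter]
    simp only [and_assoc, not_le]
    exact congrArg _ (congrArg card (filter_congr fun k _ =>
      ⟨fun h => ⟨h.2.2, h.2.1⟩, fun h => ⟨hai.trans_lt h.1, h.2, h.1⟩⟩))
  have hbelow : #{k | i < k ∧ ρ k < ρ a} =
      #{k | i < k ∧ ρ k < ρ a ∧ ρ k < ρ j} + #{k | i < k ∧ ρ j ≤ ρ k ∧ ρ k < ρ a} := by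
    rw [← card_filter_add_card_filter_not (p := (ρ · < ρ j)), filter_filter, filter_filter]
    simp only [and_assoc, not_lt]
    exact congrArg _ (congrArg card (filter_congr fun k _ =>
      and_congr_right fun _ => and_comm))
  have hleft_sub : ({k | a < k ∧ ρ k < ρ a ∧ k ≤ i} : Finset (Fin n)) ⊆
      ({p | a < p ∧ p ≤ i ∧ ¬ IsLRMax ρ p} : Finset (Fin n)) := by
    intro k
    simp only [mem_filter, mem_univ, true_and]
    exact fun ⟨hak, hka, hki⟩ => ⟨hak, hki, fun hk => (hk a hak).asymm hka⟩
  have hK_sub : ({k | i < k ∧ ρ k < ρ a ∧ ρ k < ρ j} : Finset (Fin n)) ⊆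
      ({k | i < k ∧ ρ k < ρ j} : Finset (Fin n)) := by
    intro k
    simp only [mem_filter, mem_univ, true_and]
    exact fun ⟨hik, _, hkj⟩ => ⟨hik, hkj⟩
  rcases lt_or_gt_of_ne (ρ.injective.ne (hai.trans_lt hij_lt).ne) with haj | hja
  · have hT : #{k | i < k ∧ ρ j ≤ ρ k ∧ ρ k < ρ a} = 0 :=
      card_eq_zero.2 (filter_eq_empty_iff.2 fun k _ ⟨_, hjk, hka⟩ =>
        (hjk.trans_lt hka).not_gt haj)
    have := card_le_card hleft_sub
    have := card_le_card hK_sub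
    omega
  · have hleft : ({k | a < k ∧ ρ k < ρ a ∧ k ≤ i} : Finset (Fin n)) =
        ({p | a < p ∧ p ≤ i ∧ ¬ IsLRMax ρ p} : Finset (Fin n)) := by
      refine (hleft_sub.antisymm fun p => ?_)
      simp only [mem_filter, mem_univ, true_and]
      exact fun ⟨hap, hpi, hp⟩ =>
        ⟨hap, (hrl p hpi hp j (hpi.trans_lt hij_lt)).trans hja, hpi⟩
    have hK : ({k | i < k ∧ ρ k < ρ a ∧ ρ k < ρ j} : Finset (Fin n)) =
        ({k | i < k ∧ ρ k < ρ j} : Finset (Fin n)) :=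
      hK_sub.antisymm fun k => by
        simp only [mem_filter, mem_univ, true_and]
        exact fun ⟨hik, hkj⟩ => ⟨hik, hkj.trans hja, hkj⟩
    rw [hright, hbelow, hleft, hK]
    omega

theorem not_isLRMax_and_card_eq_of_jump
    (hnj : ∀ q p : Fin n, p.val = q.val + 1 → p ≤ i → height321 ρ q ≤ height321 ρ p + 1)
    (hij : j.val = i.val + 1) {d : ℕ} (hjump : height321 ρ j + 1 + d = height321 ρ i) :
    ¬ IsLRMax ρ j ∧ #{k | i < k ∧ ρ k < ρ j} = d := by
  have hj : ¬ IsLRMax ρ j := fun hj => by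
    have := height321_le_of_isLRMax_succ ρ hij hj; omega
  have hi : IsLRMax ρ i ∨ IsRLMin ρ i :=
    or_iff_not_imp_left.2 (isRLMin_of_forall_height321_le ρ hnj le_rfl)
  have := height321_eq_height321_succ_add ρ hij hj hi
  exact ⟨hj, by omega⟩

theorem card_occurrences_eq_mul_sum (hil : i.val + l < n) (hij : j.val = i.val + 1)
    (hrl : ∀ p ≤ i, ¬ IsLRMax ρ p → IsRLMin ρ p)
    (hrun : ∀ b : Fin n, i < b → b.val ≤ i.val + l →
      ρ j ≤ ρ b ∧ ∀ k, b < k → ρ j < ρ k → ρ b < ρ k)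
    {K : Finset (Fin n)} (hK : K = ({k | i < k ∧ ρ k < ρ j} : Finset (Fin n))) :
    #{t : Fin n × Fin n × Fin n | t.1 ≤ i ∧ IsLRMax ρ t.1 ∧ i < t.2.1 ∧
      t.2.1.val ≤ i.val + l ∧ t.2.2 ∈ K ∧ t.1 < t.2.1 ∧ t.2.1 < t.2.2 ∧
      ρ t.2.2 < ρ t.2.1 ∧ ρ t.2.1 < ρ t.1} =
    #K * ∑ a ∈ {a | a ≤ i ∧ IsLRMax ρ a},
      min (#{k | a < k ∧ ρ k < ρ a} - #K - #{p | a < p ∧ p ≤ i ∧ ¬ IsLRMax ρ p}) l := by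
  set A : Finset (Fin n) := {a | a ≤ i ∧ IsLRMax ρ a}
  set B : Finset (Fin n) := {b | i < b ∧ b.val ≤ i.val + l}
  have hAB : ∀ a ∈ A, ∀ b ∈ B, a < b := fun a ha b hb =>
    (mem_filter.1 ha).2.1.trans_lt (mem_filter.1 hb).2.1
  have hBK : ∀ b ∈ B, ∀ c ∈ K, b < c ∧ ρ c < ρ b := by
    intro b hb c hc
    simp only [B, hK, mem_filter, mem_univ, true_and] at hb hc
    refine ⟨lt_of_not_ge fun hcb => ?_, hc.2.trans_le (hrun b hb.1 hb.2).1⟩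
    exact (hrun c hc.1 (by rw [Fin.le_def] at hcb; omega)).1.not_gt hc.2
  have htriples := card_triples_eq_sum ρ A B K hAB hBK
  simp only [A, B, mem_filter, mem_univ, true_and, and_assoc] at htriples
  rw [htriples, mul_comm, sum_mul]
  refine sum_congr rfl fun a ha => ?_
  rw [filter_filter, hK, card_sub_sub_eq_card ρ hij hrl (mem_filter.1 ha).2.1,
    ← card_filter_run_lt_eq_min ρ hil hij hrun]
  simp only [and_assoc]

end FirstJump

/-- Suppose the path `ψ_(3,2,1)(ρ)` has its *first* jump at position `i`, of depth `d ≥ 1`,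
followed immediately by a *maximal* run of `l ≥ 1` consecutive down-steps, and let
`K = {k : k > i, ρ k < ρ (i+1)}`, so that `|K| = d`.  For every left-to-right maximum
`ρ a` weakly to the left of the jump put `H a = #{k > a : ρ k < ρ a}` and
`s a = #{p : a < p ≤ i, ρ p not a left-to-right maximum}`.  Then the number of
occurrences `(a,b,c)` of the pattern (3,2,1) with `ρ a` a left-to-right maximum weakly
left of the jump, `i < b ≤ i + l` and `c ∈ K` equals
`d · Σ_a max 0 (min (H a - d - s a) l)` (truncated subtraction). -/
theorem first_jump_counts_321_occurrences {n : ℕ} (ρ : Equiv.Perm (Fin n)) (d l : ℕ)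
    (hl : 1 ≤ l) (i : Fin n) (hil : (i : ℕ) + l < n)
    (h : ℕ → ℕ) (hh : ∀ p : Fin n, h (p : ℕ) = height321 ρ p)
    (hfirst : ∀ q : Fin n, (q : ℕ) < (i : ℕ) → h (q : ℕ) ≤ h ((q : ℕ) + 1) + 1)
    (hjump : h ((i : ℕ) + 1) + 1 + d = h (i : ℕ))
    (hdown : ∀ j, 1 ≤ j → j ≤ l - 1 → h ((i : ℕ) + j + 1) + 1 = h ((i : ℕ) + j))
    (K : Finset (Fin n))
    (hK : K = Finset.univ.filter (fun k =>
      i < k ∧ ρ k < ρ ⟨(i : ℕ) + 1, by omega⟩)) :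
    K.card = d ∧
    (Finset.univ.filter (fun t : Fin n × Fin n × Fin n =>
      t.1 ≤ i ∧ IsLRMax ρ t.1 ∧
      i < t.2.1 ∧ (t.2.1 : ℕ) ≤ (i : ℕ) + l ∧ t.2.2 ∈ K ∧
      t.1 < t.2.1 ∧ t.2.1 < t.2.2 ∧
      ρ t.2.2 < ρ t.2.1 ∧ ρ t.2.1 < ρ t.1)).card =
    d * ∑ a ∈ Finset.univ.filter (fun a : Fin n => a ≤ i ∧ IsLRMax ρ a),
      min ((Finset.univ.filter (fun k => a < k ∧ ρ k < ρ a)).card - d -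
           (Finset.univ.filter (fun p => a < p ∧ p ≤ i ∧ ¬ IsLRMax ρ p)).card) l := by
  set j : Fin n := ⟨i + 1, by omega⟩
  have hij : j.val = i.val + 1 := rfl
  have hnj : ∀ q p : Fin n, p.val = q.val + 1 → p ≤ i →
      height321 ρ q ≤ height321 ρ p + 1 := fun q p hqp hpi => by
    have := hfirst q (by rw [Fin.le_def] at hpi; omega)
    rwa [hh q, ← hqp, hh p] at this
  have hjump' : height321 ρ j + 1 + d = height321 ρ i := by rw [← hh, ← hh]; exact hjump
  obtain ⟨hjL, hKd⟩ := not_isLRMax_and_card_eq_of_jump ρ hnj hij hjump'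
  have hrun : ∀ b : Fin n, i < b → b.val ≤ i.val + l →
      ρ j ≤ ρ b ∧ ∀ k, b < k → ρ j < ρ k → ρ b < ρ k := fun b hib hbl =>
    (downRun_invariant ρ hij hjL (fun q p hqp hiq hpl => by
      rw [Fin.lt_def] at hiq
      have := hdown (q.val - i.val) (by omega) (by omega)
      rwa [show i.val + (q.val - i.val) = q.val by omega, ← hqp, hh, hh] at this) hib hbl).2
  rw [← hK] at hKd
  refine ⟨hKd, ?_⟩
  rw [← hKd]
  exact card_occurrences_eq_mul_sum ρ hil hij
    (fun _ => isRLMin_of_forall_height321_le ρ hnj) hrun hK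
end
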